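/- arXiv:1602.07567 — 5 statements merged into one kernel-verified Lean document; each statement's English description precedes it below -/
import Mathlib

section
/- Let f : [0,1] → ℝ be continuously differentiable with f(0) = 0. Then ∫₀¹ f(x)² dx ≤ (4/π²) ∫₀¹ f′(x)² dx. -/
open MeasureTheory Real intervalIntegral Filter Set Topology

noncomputable def wirtingerG (f : ℝ → ℝ) (x : ℝ) : ℝ :=
  π / 2 * (Real.cos (π / 2 * x) * f x ^ 2 / Real.sin (π / 2 * x))

noncomputable def wirtingerD (f f' : ℝ → ℝ) (x : ℝ) : ℝ :=
  -(π ^ 2 / 4) * f x ^ 2 / Real.sin (π / 2 * x) ^ 2 +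
    π * Real.cos (π / 2 * x) * f x * f' x / Real.sin (π / 2 * x)

lemma wirtinger_sin_pos {x : ℝ} (hx0 : 0 < x) (hx1 : x ≤ 1) : 0 < Real.sin (π / 2 * x) := by
  apply Real.sin_pos_of_pos_of_lt_pi
  · positivity
  · nlinarith [Real.pi_pos]

lemma wirtinger_alg1 (s c F F' : ℝ) (hs : s ≠ 0) (hpyth : s ^ 2 + c ^ 2 = 1) :
    -(π ^ 2 / 4) * F ^ 2 / s ^ 2 + π * c * F * F' / s =
    π / 2 * ((((-s * (π / 2)) * F ^ 2 + c * (2 * F ^ 1 * F')) * s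
      - (c * F ^ 2) * (c * (π / 2))) / s ^ 2) := by
  field_simp
  linear_combination (4 * π * F ^ 2) * hpyth

lemma wirtinger_alg2 (s c F F' : ℝ) (hs : s ≠ 0) (hpyth : s ^ 2 + c ^ 2 = 1) :
    F' ^ 2 - π ^ 2 / 4 * F ^ 2 -
      (-(π ^ 2 / 4) * F ^ 2 / s ^ 2 + π * c * F * F' / s) =
      (F' - π / 2 * (c / s) * F) ^ 2 := by
  field_simp
  linear_combination (-4 * π ^ 2 * F ^ 2) * hpyth

lemma wirtinger_hasDerivAt_G (f f' : ℝ → ℝ)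
    (hf : ∀ x ∈ Set.Icc (0:ℝ) 1, HasDerivWithinAt f (f' x) (Set.Icc (0:ℝ) 1) x)
    {x : ℝ} (hx : x ∈ Set.Ioo (0:ℝ) 1) :
    HasDerivAt (wirtingerG f) (wirtingerD f f' x) x := by
  have hs : Real.sin (π / 2 * x) ≠ 0 := (wirtinger_sin_pos hx.1 hx.2.le).ne'
  have hfd : HasDerivAt f (f' x) x :=
    (hf x ⟨hx.1.le, hx.2.le⟩).hasDerivAt (Icc_mem_nhds hx.1 hx.2)
  have hu : HasDerivAt (fun y : ℝ => π / 2 * y) (π / 2) x := by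
    simpa using (hasDerivAt_id x).const_mul (π / 2)
  have h1 := ((hu.cos.mul (hfd.pow 2)).div hu.sin hs).const_mul (π / 2)
  exact h1.congr_deriv (by
    simp only [wirtingerD, Pi.pow_apply, Pi.mul_apply]
    linear_combination -(wirtinger_alg1 (Real.sin (π / 2 * x)) (Real.cos (π / 2 * x))
      (f x) (f' x) hs (Real.sin_sq_add_cos_sq _)))

/-- **1-D Wirtinger (Poincaré) inequality.** If `f : [0,1] → ℝ` is continuously
differentiable (with derivative `f'`) and `f 0 = 0`, then
`∫₀¹ f² ≤ (4/π²) ∫₀¹ (f')²`. -/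
theorem wirtinger_1d (f f' : ℝ → ℝ)
    (hf : ∀ x ∈ Set.Icc (0:ℝ) 1, HasDerivWithinAt f (f' x) (Set.Icc (0:ℝ) 1) x)
    (hf' : ContinuousOn f' (Set.Icc (0:ℝ) 1))
    (hf0 : f 0 = 0) :
    ∫ x in Set.Icc (0:ℝ) 1, (f x) ^ 2 ≤ (4 / π ^ 2) * ∫ x in Set.Icc (0:ℝ) 1, (f' x) ^ 2 := by
  have hπ : (0:ℝ) < π := Real.pi_pos
  have hfc : ContinuousOn f (Set.Icc (0:ℝ) 1) := fun x hx => (hf x hx).continuousWithinAt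
  set h : ℝ → ℝ := fun x => (f' x) ^ 2 - π ^ 2 / 4 * f x ^ 2 with hh
  have hhcont : ContinuousOn h (Set.Icc (0:ℝ) 1) :=
    (hf'.pow 2).sub (continuousOn_const.mul (hfc.pow 2))
  have hhint : ∀ a b : ℝ, a ∈ Set.Icc (0:ℝ) 1 → b ∈ Set.Icc (0:ℝ) 1 →
      IntervalIntegrable h volume a b := fun a b ha hb =>
    (hhcont.mono (Set.uIcc_subset_Icc ha hb)).intervalIntegrable
  -- bound on f'
  obtain ⟨M, hM⟩ := isCompact_Icc.exists_bound_of_continuousOn hf'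
  have hM0 : 0 ≤ M := le_trans (norm_nonneg _) (hM 0 ⟨le_rfl, zero_le_one⟩)
  -- linear bound on f
  have hfb : ∀ x ∈ Set.Icc (0:ℝ) 1, |f x| ≤ M * x := by
    intro x hx
    have := (convex_Icc (0:ℝ) 1).norm_image_sub_le_of_norm_hasDerivWithin_le hf hM
      (Set.left_mem_Icc.2 zero_le_one) hx
    simpa [hf0, Real.norm_eq_abs, abs_of_nonneg hx.1] using this
  -- key inequality for each ε ∈ (0,1)
  have key : ∀ ε ∈ Set.Ioo (0:ℝ) 1, 0 ≤ (∫ x in ε..1, h x) + wirtingerG f ε := by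
    intro ε hε
    have hε1 : ε ≤ 1 := hε.2.le
    have hsub : Set.Icc ε 1 ⊆ Set.Icc 0 1 := Set.Icc_subset_Icc hε.1.le le_rfl
    have hsinc : ContinuousOn (fun x => Real.sin (π / 2 * x)) (Set.Icc ε 1) :=
      (Real.continuous_sin.comp (continuous_const.mul continuous_id)).continuousOn
    have hcosc : ContinuousOn (fun x => Real.cos (π / 2 * x)) (Set.Icc ε 1) :=
      (Real.continuous_cos.comp (continuous_const.mul continuous_id)).continuousOn
    have hsne : ∀ x ∈ Set.Icc ε 1, Real.sin (π / 2 * x) ≠ 0 := fun x hx =>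
      (wirtinger_sin_pos (lt_of_lt_of_le hε.1 hx.1) hx.2).ne'
    have hGc : ContinuousOn (wirtingerG f) (Set.Icc ε 1) :=
      continuousOn_const.mul (((hcosc.mul ((hfc.mono hsub).pow 2)).div hsinc hsne))
    have hDc : ContinuousOn (wirtingerD f f') (Set.Icc ε 1) := by
      apply ContinuousOn.add
      · exact (continuousOn_const.mul ((hfc.mono hsub).pow 2)).div (hsinc.pow 2)
          (fun x hx => pow_ne_zero _ (hsne x hx))
      · exact ((continuousOn_const.mul hcosc).mul (hfc.mono hsub) |>.mul
          (hf'.mono hsub)).div hsinc hsne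
    have hDint : IntervalIntegrable (wirtingerD f f') volume ε 1 :=
      (hDc.mono (by rw [Set.uIcc_of_le hε1])).intervalIntegrable
    have hftc : ∫ x in ε..1, wirtingerD f f' x = wirtingerG f 1 - wirtingerG f ε :=
      integral_eq_sub_of_hasDeriv_right_of_le hε1 hGc
        (fun x hx => (wirtinger_hasDerivAt_G f f' hf
          ⟨lt_trans hε.1 hx.1, hx.2⟩).hasDerivWithinAt) hDint
    have hG1 : wirtingerG f 1 = 0 := by
      simp [wirtingerG, mul_one, Real.cos_pi_div_two]
    have hint2 : IntervalIntegrable h volume ε 1 :=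
      hhint ε 1 ⟨hε.1.le, hε1⟩ (Set.right_mem_Icc.2 zero_le_one)
    have hmono : ∫ x in ε..1, wirtingerD f f' x ≤ ∫ x in ε..1, h x := by
      apply intervalIntegral.integral_mono_on hε1 hDint hint2
      intro x hx
      have hs := hsne x hx
      have hid := wirtinger_alg2 (Real.sin (π / 2 * x)) (Real.cos (π / 2 * x))
        (f x) (f' x) hs (Real.sin_sq_add_cos_sq _)
      have hsq := sq_nonneg (f' x - π / 2 * (Real.cos (π / 2 * x) / Real.sin (π / 2 * x)) * f x)
      simp only [hh, wirtingerD]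
      nlinarith [hid, hsq]
    rw [hftc, hG1] at hmono
    linarith
  -- limit ε → 0⁺
  have h01 : IntervalIntegrable h volume 0 1 :=
    hhint 0 1 (Set.left_mem_Icc.2 zero_le_one) (Set.right_mem_Icc.2 zero_le_one)
  obtain ⟨C, hC⟩ := isCompact_Icc.exists_bound_of_continuousOn hhcont
  have hIoo : Set.Ioo (0:ℝ) 1 ∈ 𝓝[>] (0:ℝ) := Ioo_mem_nhdsGT_of_mem ⟨le_rfl, zero_lt_one⟩
  have hsmall : Tendsto (fun ε => ∫ x in (0:ℝ)..ε, h x) (𝓝[>] (0:ℝ)) (𝓝 0) := by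
    apply squeeze_zero_norm' (a := fun ε => C * ε)
    · filter_upwards [hIoo] with ε hε
      have : ∀ x ∈ Set.uIoc (0:ℝ) ε, ‖h x‖ ≤ C := by
        intro x hx
        rw [Set.uIoc_of_le hε.1.le] at hx
        exact hC x ⟨hx.1.le, hx.2.trans hε.2.le⟩
      calc ‖∫ x in (0:ℝ)..ε, h x‖ ≤ C * |ε - 0| :=
            intervalIntegral.norm_integral_le_of_norm_le_const this
        _ = C * ε := by rw [sub_zero, abs_of_pos hε.1]
    · have : Tendsto (fun ε : ℝ => C * ε) (𝓝 0) (𝓝 (C * 0)) :=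
        (continuous_const.mul continuous_id).tendsto 0
      simpa using this.mono_left nhdsWithin_le_nhds
  have hInt : Tendsto (fun ε => ∫ x in ε..1, h x) (𝓝[>] (0:ℝ))
      (𝓝 (∫ x in (0:ℝ)..1, h x)) := by
    have heq : ∀ᶠ ε in 𝓝[>] (0:ℝ),
        (∫ x in (0:ℝ)..1, h x) - (∫ x in (0:ℝ)..ε, h x) = ∫ x in ε..1, h x := by
      filter_upwards [hIoo] with ε hε
      have h1 := hhint 0 ε (Set.left_mem_Icc.2 zero_le_one) ⟨hε.1.le, hε.2.le⟩
      have h2 := hhint ε 1 ⟨hε.1.le, hε.2.le⟩ (Set.right_mem_Icc.2 zero_le_one)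
      have := intervalIntegral.integral_add_adjacent_intervals h1 h2
      linarith
    have := (tendsto_const_nhds (x := ∫ x in (0:ℝ)..1, h x)).sub hsmall
    rw [sub_zero] at this
    exact Tendsto.congr' heq this
  have hGto : Tendsto (fun ε => wirtingerG f ε) (𝓝[>] (0:ℝ)) (𝓝 0) := by
    apply squeeze_zero_norm' (a := fun ε => π / 2 * (M ^ 2 * ε))
    · filter_upwards [hIoo] with ε hε
      have hsp : 0 < Real.sin (π / 2 * ε) := wirtinger_sin_pos hε.1 hε.2.le
      have hsge : ε ≤ Real.sin (π / 2 * ε) := by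
        have := Real.mul_le_sin (x := π / 2 * ε) (by nlinarith [hε.1]) (by nlinarith [hε.2])
        calc ε = 2 / π * (π / 2 * ε) := by field_simp
          _ ≤ Real.sin (π / 2 * ε) := this
      have hfε : |f ε| ≤ M * ε := hfb ε ⟨hε.1.le, hε.2.le⟩
      have hfε2 : f ε ^ 2 ≤ M ^ 2 * ε ^ 2 := by nlinarith [abs_nonneg (f ε), sq_abs (f ε)]
      have hcos : |Real.cos (π / 2 * ε)| ≤ 1 := Real.abs_cos_le_one _
      have hnum : |Real.cos (π / 2 * ε) * f ε ^ 2| ≤ M ^ 2 * ε ^ 2 := by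
        rw [abs_mul, abs_of_nonneg (sq_nonneg (f ε))]
        nlinarith [sq_nonneg (f ε), abs_nonneg (Real.cos (π / 2 * ε))]
      have hdiv : |Real.cos (π / 2 * ε) * f ε ^ 2 / Real.sin (π / 2 * ε)| ≤ M ^ 2 * ε := by
        rw [abs_div, abs_of_pos hsp, div_le_iff₀ hsp]
        calc |Real.cos (π / 2 * ε) * f ε ^ 2| ≤ M ^ 2 * ε ^ 2 := hnum
          _ = M ^ 2 * ε * ε := by ring
          _ ≤ M ^ 2 * ε * Real.sin (π / 2 * ε) := by
              exact mul_le_mul_of_nonneg_left hsge (mul_nonneg (sq_nonneg M) hε.1.le)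
      calc ‖wirtingerG f ε‖ = π / 2 * |Real.cos (π / 2 * ε) * f ε ^ 2 / Real.sin (π / 2 * ε)| := by
            rw [wirtingerG, Real.norm_eq_abs, abs_mul, abs_of_pos (by positivity : (0:ℝ) < π / 2)]
        _ ≤ π / 2 * (M ^ 2 * ε) := by
            apply mul_le_mul_of_nonneg_left hdiv (by positivity)
    · have : Tendsto (fun ε : ℝ => π / 2 * (M ^ 2 * ε)) (𝓝 0) (𝓝 (π / 2 * (M ^ 2 * 0))) :=
        (continuous_const.mul (continuous_const.mul continuous_id)).tendsto 0
      simpa using this.mono_left nhdsWithin_le_nhds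
  have hge : 0 ≤ ∫ x in (0:ℝ)..1, h x := by
    have hlim : Tendsto (fun ε => (∫ x in ε..1, h x) + wirtingerG f ε) (𝓝[>] (0:ℝ))
        (𝓝 (∫ x in (0:ℝ)..1, h x)) := by
      have := hInt.add hGto
      simpa using this
    exact ge_of_tendsto hlim (by filter_upwards [hIoo] with ε hε using key ε hε)
  -- unfold h
  have hfint : IntervalIntegrable (fun x => (f x) ^ 2) volume 0 1 :=
    ((hfc.pow 2).mono (by rw [Set.uIcc_of_le zero_le_one])).intervalIntegrable
  have hf'int : IntervalIntegrable (fun x => (f' x) ^ 2) volume 0 1 :=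
    ((hf'.pow 2).mono (by rw [Set.uIcc_of_le zero_le_one])).intervalIntegrable
  have hsplit2 : ∫ x in (0:ℝ)..1, h x =
      (∫ x in (0:ℝ)..1, (f' x) ^ 2) - π ^ 2 / 4 * ∫ x in (0:ℝ)..1, (f x) ^ 2 := by
    rw [hh]
    rw [intervalIntegral.integral_sub hf'int (hfint.const_mul _)]
    rw [intervalIntegral.integral_const_mul]
  have e1 : ∫ x in Set.Icc (0:ℝ) 1, (f x) ^ 2 = ∫ x in (0:ℝ)..1, (f x) ^ 2 := by
    rw [intervalIntegral.integral_of_le zero_le_one, MeasureTheory.integral_Icc_eq_integral_Ioc]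
  have e2 : ∫ x in Set.Icc (0:ℝ) 1, (f' x) ^ 2 = ∫ x in (0:ℝ)..1, (f' x) ^ 2 := by
    rw [intervalIntegral.integral_of_le zero_le_one, MeasureTheory.integral_Icc_eq_integral_Ioc]
  rw [e1, e2]
  rw [hsplit2] at hge
  have hπ2 : (0:ℝ) < π ^ 2 := by positivity
  have hkey : π ^ 2 / 4 * (∫ x in (0:ℝ)..1, (f x) ^ 2) ≤ ∫ x in (0:ℝ)..1, (f' x) ^ 2 := by
    linarith
  have hmul := mul_le_mul_of_nonneg_left hkey (show (0:ℝ) ≤ 4 / π ^ 2 by positivity)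
  have heq : 4 / π ^ 2 * (π ^ 2 / 4 * ∫ x in (0:ℝ)..1, (f x) ^ 2) =
      ∫ x in (0:ℝ)..1, (f x) ^ 2 := by
    field_simp
  linarith
end

section
/- Let n ≥ 1 and let e : [0,1]^n → ℝ be continuously differentiable and vanish on Γ_D (i.e., e(x) = 0 whenever some coordinate x_p = 0). Then ∫_Ω e(x)² dx ≤ (4/(π² n)) ∫_Ω |∇e(x)|² dx, equivalently ∫_Ω [ (4/(π² n)) |∇e|² − e² ] dx ≥ 0. -/
open MeasureTheory Real Matrix

noncomputable section
set_option maxHeartbeats 1000000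

/-- The closed unit hypercube `[0,1]^n`. -/
def cube (n : ℕ) : Set (Fin n → ℝ) := Set.univ.pi fun _ => Set.Icc (0:ℝ) 1

/-- Partial derivative of `u` in the `p`-th coordinate direction. -/
def pd {n : ℕ} (p : Fin n) (u : (Fin n → ℝ) → ℝ) (x : Fin n → ℝ) : ℝ :=
  fderiv ℝ u x (Pi.single p 1)

/-- Squared Euclidean norm of the gradient, `|∇u|²`. -/
def gradSq {n : ℕ} (u : (Fin n → ℝ) → ℝ) (x : Fin n → ℝ) : ℝ := ∑ p, (pd p u x) ^ 2

/-- Laplacian `Δu = Σ_p u_{x_p x_p}`. -/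
def lap {n : ℕ} (u : (Fin n → ℝ) → ℝ) (x : Fin n → ℝ) : ℝ := ∑ p, pd p (pd p u) x

/-- Surface integral over `Γ_N`: `Σ_p ∫_{[0,1]^{n-1}} h|_{x_p = 1} dx'`
(each face integral realized as an integral over the cube of a function
independent of the `p`-th coordinate). -/
def faceInt {n : ℕ} (h : (Fin n → ℝ) → ℝ) : ℝ :=
  ∑ p : Fin n, ∫ x in cube n, h (Function.update x p 1)

/-- `xᵀ∇u`. -/
def xGrad {n : ℕ} (u : (Fin n → ℝ) → ℝ) (x : Fin n → ℝ) : ℝ := ∑ p, x p * pd p u x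

/-- Minimal eigenvalue of a symmetric matrix, via the Rayleigh quotient. -/
def lamMin (M : Matrix (Fin 3) (Fin 3) ℝ) : ℝ :=
  sInf {r | ∃ v : Fin 3 → ℝ, (∑ i, (v i) ^ 2) = 1 ∧ r = v ⬝ᵥ M.mulVec v}

/-- Maximal eigenvalue of a symmetric matrix, via the Rayleigh quotient. -/
def lamMax (M : Matrix (Fin 3) (Fin 3) ℝ) : ℝ :=
  sSup {r | ∃ v : Fin 3 → ℝ, (∑ i, (v i) ^ 2) = 1 ∧ r = v ⬝ᵥ M.mulVec v}

/-- Negative definiteness. -/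
def NegDefM {m : ℕ} (M : Matrix (Fin m) (Fin m) ℝ) : Prop := (-M).PosDef

/-- Negative semidefiniteness. -/
def NegSemidefM {m : ℕ} (M : Matrix (Fin m) (Fin m) ℝ) : Prop := (-M).PosSemidef

/-- The matrix `Φ₀` of LMI (12). -/
def Phi0 (n : ℕ) (χ lam0 : ℝ) : Matrix (Fin 3) (Fin 3) ℝ :=
  !![1/2 - 4*lam0/(π^2*n), Real.sqrt n * χ, 0;
     Real.sqrt n * χ, 1/2, ((n:ℝ)-1)*χ/2;
     0, ((n:ℝ)-1)*χ/2, lam0]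

/-- `Φ₁ = Φ₀ + diag(4λ₀/(π²n), 0, 0)`. -/
def Phi1 (n : ℕ) (χ lam0 : ℝ) : Matrix (Fin 3) (Fin 3) ℝ :=
  Phi0 n χ lam0 + Matrix.diagonal ![4*lam0/(π^2*n), 0, 0]

/-- The matrix `Ψ₂` of LMI (14). -/
def Psi2 (n : ℕ) (k χ δ g1 lam1 : ℝ) : Matrix (Fin 3) (Fin 3) ℝ :=
  !![-χ + δ*(1 + χ*k*((n:ℝ)-1)) + 4*lam1/(π^2*n), 2*δ*Real.sqrt n*χ, Real.sqrt n*g1*χ;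
     2*δ*Real.sqrt n*χ, -χ + δ, g1/2 + δ*((n:ℝ)-1)*χ;
     Real.sqrt n*g1*χ, g1/2 + δ*((n:ℝ)-1)*χ, -lam1 + g1*((n:ℝ)-1)*χ]

/-- The matrix `Φ` of the exact-observability LMI (32), with `σ = e^{-2δT*}`. -/
def PhiM (n : ℕ) (χ σ lam2 : ℝ) : Matrix (Fin 3) (Fin 3) ℝ :=
  !![-(1-σ)/2 + 4*lam2/(π^2*n), Real.sqrt n*(1+σ)*χ, 0;
     Real.sqrt n*(1+σ)*χ, -(1-σ)/2, ((n:ℝ)-1)*(1+σ)*χ/2;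
     0, ((n:ℝ)-1)*(1+σ)*χ/2, -lam2]

/-- `α = 2λ_min(Φ₀)`. -/
def alphaC (n : ℕ) (χ lam0 : ℝ) : ℝ := 2 * lamMin (Phi0 n χ lam0)

/-- `β = 2(1 + 4/(π²n))λ_max(Φ₁) + χk(n−1)`. -/
def betaC (n : ℕ) (k χ lam0 : ℝ) : ℝ :=
  2 * (1 + 4/(π^2*n)) * lamMax (Phi1 n χ lam0) + χ*k*((n:ℝ)-1)

lemma wirtinger_1d_s1 (g : ℝ → ℝ) (hg : ContDiff ℝ 1 g) (h0 : g 0 = 0) :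
    0 ≤ ∫ t in Set.Icc (0:ℝ) 1, ((4/π^2) * (deriv g t)^2 - (g t)^2) := by
  have hπ := Real.pi_pos
  have hgc : Continuous g := hg.continuous
  have hg' : Continuous (deriv g) := hg.continuous_deriv le_rfl
  have hdg : ∀ t, HasDerivAt g (deriv g t) t :=
    fun t => (hg.differentiable one_ne_zero t).hasDerivAt
  set c : ℝ → ℝ := fun t => Real.cos (π * t / 2) with hc_def
  set s : ℝ → ℝ := fun t => Real.sin (π * t / 2) with hs_def
  have hcc : Continuous c := by continuity
  have hsc : Continuous s := by continuity
  -- derivative of the linear inner function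
  have hlin : ∀ t : ℝ, HasDerivAt (fun t : ℝ => π * t / 2) (π / 2) t := by
    intro t
    simpa using ((hasDerivAt_id t).const_mul π).div_const 2
  have hcd : ∀ t : ℝ, HasDerivAt c (-s t * (π / 2)) t := fun t =>
    ((Real.hasDerivAt_cos (π * t / 2)).comp t (hlin t) :)
  have hsd : ∀ t : ℝ, HasDerivAt s (c t * (π / 2)) t := fun t =>
    ((Real.hasDerivAt_sin (π * t / 2)).comp t (hlin t) :)
  have hspos : ∀ t ∈ Set.Ioc (0:ℝ) 1, 0 < s t := by
    intro t ht
    apply Real.sin_pos_of_pos_of_lt_pi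
    · nlinarith [ht.1]
    · nlinarith [ht.2]
  set F : ℝ → ℝ := fun t => (π/2) * (g t)^2 * (c t / s t) with hF_def
  set res : ℝ → ℝ := fun t => deriv g t - (π/2) * g t * (c t / s t) with hres_def
  have hF : ∀ t ∈ Set.Ioc (0:ℝ) 1,
      HasDerivAt F ((deriv g t)^2 - (π^2/4) * (g t)^2 - (res t)^2) t := by
    intro t ht
    have hs0 : s t ≠ 0 := ne_of_gt (hspos t ht)
    have hq : HasDerivAt (fun t => c t / s t)
        ((-s t * (π / 2) * s t - c t * (c t * (π / 2))) / (s t)^2) t :=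
      (hcd t).div (hsd t) hs0
    have hg2 : HasDerivAt (fun t => (g t)^2) (2 * g t * deriv g t) t := by
      have h := (hdg t).pow 2; simp at h; exact h
    have h1 : HasDerivAt F
        ((π/2) * ((2 * g t * deriv g t) * (c t / s t) +
          (g t)^2 * ((-s t * (π / 2) * s t - c t * (c t * (π / 2))) / (s t)^2))) t := by
      simpa [hF_def, mul_assoc] using ((hg2.mul hq).const_mul (π/2))
    convert h1 using 1
    have hsq : s t ^ 2 + c t ^ 2 = 1 := Real.sin_sq_add_cos_sq _
    simp only [hres_def]; field_simp
    ring
  -- continuity facts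
  have hresc : ContinuousOn res (Set.Ioc 0 1) := by
    apply ContinuousOn.sub hg'.continuousOn
    exact ContinuousOn.mul (by fun_prop) (ContinuousOn.div hcc.continuousOn hsc.continuousOn
      (fun t ht => ne_of_gt (hspos t ht)))
  -- bounds
  obtain ⟨C₁, hC₁⟩ := isCompact_Icc.exists_bound_of_continuousOn
    (f := fun t => (deriv g t)^2 - (π^2/4) * (g t)^2) (s := Set.Icc (0:ℝ) 1) (by fun_prop)
  obtain ⟨C₂, hC₂⟩ := isCompact_Icc.exists_bound_of_continuousOn
    (f := deriv g) (s := Set.Icc (0:ℝ) 1) hg'.continuousOn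
  have hC₁0 : 0 ≤ C₁ := le_trans (norm_nonneg _) (hC₁ 0 ⟨le_rfl, by norm_num⟩)
  have hC₂0 : 0 ≤ C₂ := le_trans (norm_nonneg _) (hC₂ 0 ⟨le_rfl, by norm_num⟩)
  have hgb : ∀ ε ∈ Set.Ioc (0:ℝ) 1, |g ε| ≤ C₂ * ε := by
    intro ε hε
    have hftc : ∫ t in (0:ℝ)..ε, deriv g t = g ε - g 0 :=
      intervalIntegral.integral_deriv_eq_sub
        (fun t _ => hg.differentiable one_ne_zero t) (hg'.intervalIntegrable 0 ε)
    have hb : ‖∫ t in (0:ℝ)..ε, deriv g t‖ ≤ C₂ * |ε - 0| := by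
      apply intervalIntegral.norm_integral_le_of_norm_le_const
      intro t ht
      rw [Set.uIoc_of_le hε.1.le] at ht
      exact hC₂ t ⟨ht.1.le, le_trans ht.2 hε.2⟩
    rw [hftc, h0, sub_zero] at hb
    calc |g ε| ≤ C₂ * |ε - 0| := hb
    _ = C₂ * ε := by rw [sub_zero, abs_of_pos hε.1]
  have hFb : ∀ ε ∈ Set.Ioc (0:ℝ) (1/2), F ε ≤ (4/3) * C₂^2 * ε := by
    intro ε hε
    have hε1 : ε ∈ Set.Ioc (0:ℝ) 1 := ⟨hε.1, by linarith [hε.2]⟩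
    have hsp : 0 < s ε := hspos ε hε1
    have hx1 : π * ε / 2 ≤ 1 := by nlinarith [Real.pi_le_four, hε.2]
    have hx0 : (0:ℝ) < π * ε / 2 := by nlinarith [hε.1]
    have hse : s ε = Real.sin (π * ε / 2) := rfl
    have hce : c ε = Real.cos (π * ε / 2) := rfl
    have hslb : (3/4) * (π * ε / 2) ≤ s ε := by
      have h5 := Real.sin_gt_sub_cube hx0
      have hx3 : (π * ε / 2)^3 ≤ π * ε / 2 := by
        nlinarith [mul_nonneg (mul_nonneg hx0.le (by linarith : (0:ℝ) ≤ 1 - π * ε / 2))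
          (by linarith : (0:ℝ) ≤ 1 + π * ε / 2)]
      rw [hse]; nlinarith
    have hcub : c ε ≤ 1 := by rw [hce]; exact Real.cos_le_one _
    have hc0 : 0 ≤ c ε := by
      rw [hce]
      apply Real.cos_nonneg_of_mem_Icc
      constructor
      · nlinarith
      · nlinarith [mul_nonneg hπ.le (by linarith [hε1.2] : (0:ℝ) ≤ 1 - ε)]
    have hu : c ε / s ε ≤ 8 / (3 * π * ε) := by
      rw [div_le_div_iff₀ hsp (by exact mul_pos (by positivity) hε.1 : (0:ℝ) < 3 * π * ε)]
      nlinarith [hslb, hcub, hsp]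
    have hu0 : 0 ≤ c ε / s ε := div_nonneg hc0 hsp.le
    have hg2 : (g ε)^2 ≤ (C₂ * ε)^2 := by
      have := hgb ε hε1
      nlinarith [abs_nonneg (g ε), sq_abs (g ε)]
    calc F ε = (π/2) * (g ε)^2 * (c ε / s ε) := rfl
    _ ≤ (π/2) * (C₂ * ε)^2 * (8 / (3 * π * ε)) := by
        apply mul_le_mul (by nlinarith [sq_nonneg (g ε)]) hu hu0 (by positivity)
    _ = (4/3) * C₂^2 * ε := by
        have hεne : ε ≠ 0 := ne_of_gt hε.1
        field_simp
        ring
  -- FTC on [ε,1] and limit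
  set I : ℝ := ∫ t in (0:ℝ)..1, ((deriv g t)^2 - (π^2/4) * (g t)^2) with hI_def
  have hIlb : ∀ ε ∈ Set.Ioc (0:ℝ) (1/2), -((C₁ + (4/3) * C₂^2) * ε) ≤ I := by
    intro ε hε
    have hε1 : ε ≤ 1 := by linarith [hε.2]
    have hsub : Set.uIcc ε 1 ⊆ Set.Ioc 0 1 := by
      rw [Set.uIcc_of_le hε1]
      intro t ht
      exact ⟨lt_of_lt_of_le hε.1 ht.1, ht.2⟩
    have hiiA : IntervalIntegrable (fun t => (deriv g t)^2 - (π^2/4) * (g t)^2) volume ε 1 :=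
      (Continuous.intervalIntegrable (by fun_prop) ε 1)
    have hiiR : IntervalIntegrable (fun t => (res t)^2) volume ε 1 :=
      ContinuousOn.intervalIntegrable ((hresc.mono hsub).pow 2)
    have hftc : ∫ t in ε..1,
        ((deriv g t)^2 - (π^2/4) * (g t)^2 - (res t)^2) = F 1 - F ε :=
      intervalIntegral.integral_eq_sub_of_hasDerivAt (fun t ht => hF t (hsub ht))
        (hiiA.sub hiiR)
    have hF1 : F 1 = 0 := by
      have : c 1 = 0 := by
        simp only [hc_def]
        norm_num [Real.cos_pi_div_two]
      simp [hF_def, this]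
    have hres_nn : 0 ≤ ∫ t in ε..1, (res t)^2 :=
      intervalIntegral.integral_nonneg hε1 (fun t _ => sq_nonneg _)
    have hsplit : ∫ t in ε..1, ((deriv g t)^2 - (π^2/4) * (g t)^2)
        = (∫ t in ε..1, (res t)^2) - F ε := by
      have := intervalIntegral.integral_sub hiiA hiiR
      rw [hftc, hF1, zero_sub] at this
      linarith [this]
    have htail : -F ε ≤ ∫ t in ε..1, ((deriv g t)^2 - (π^2/4) * (g t)^2) := by
      rw [hsplit]; linarith
    have hhead : -(C₁ * ε) ≤ ∫ t in (0:ℝ)..ε, ((deriv g t)^2 - (π^2/4) * (g t)^2) := by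
      have hb : ‖∫ t in (0:ℝ)..ε, ((deriv g t)^2 - (π^2/4) * (g t)^2)‖ ≤ C₁ * |ε - 0| := by
        apply intervalIntegral.norm_integral_le_of_norm_le_const
        intro t ht
        rw [Set.uIoc_of_le hε.1.le] at ht
        exact hC₁ t ⟨ht.1.le, le_trans ht.2 hε1⟩
      rw [sub_zero, abs_of_pos hε.1] at hb
      have := abs_le.1 hb
      linarith [this.1]
    have hadd : (∫ t in (0:ℝ)..ε, ((deriv g t)^2 - (π^2/4) * (g t)^2))
        + ∫ t in ε..1, ((deriv g t)^2 - (π^2/4) * (g t)^2) = I :=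
      intervalIntegral.integral_add_adjacent_intervals
        (Continuous.intervalIntegrable (by fun_prop) 0 ε)
        (Continuous.intervalIntegrable (by fun_prop) ε 1)
    have hFε := hFb ε hε
    nlinarith [htail, hhead, hadd, hFε]
  have hI0 : 0 ≤ I := by
    by_contra hI
    push_neg at hI
    set K : ℝ := C₁ + (4/3) * C₂^2 + 1 with hK_def
    have hK0 : 0 < K := by positivity
    set ε : ℝ := min (1/2) (-I / (2 * K)) with hε_def
    have hε0 : 0 < ε := lt_min (by norm_num) (div_pos (by linarith) (by positivity))
    have hεmem : ε ∈ Set.Ioc (0:ℝ) (1/2) := ⟨hε0, min_le_left _ _⟩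
    have h1 := hIlb ε hεmem
    have h2 : (C₁ + (4/3) * C₂^2) * ε ≤ K * ε := by
      apply mul_le_mul_of_nonneg_right _ hε0.le
      simp [hK_def]
    have h3 : K * ε ≤ K * (-I / (2 * K)) :=
      mul_le_mul_of_nonneg_left (min_le_right _ _) hK0.le
    have h4 : K * (-I / (2 * K)) = -I / 2 := by field_simp
    linarith
  -- conclude
  have hconv : ∀ t : ℝ, (4/π^2) * (deriv g t)^2 - (g t)^2
      = (4/π^2) * ((deriv g t)^2 - (π^2/4) * (g t)^2) := by
    intro t; field_simp
  rw [MeasureTheory.integral_Icc_eq_integral_Ioc,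
    ← intervalIntegral.integral_of_le zero_le_one]
  simp_rw [hconv]
  rw [intervalIntegral.integral_const_mul]
  positivity

lemma wirtinger_slice (m : ℕ) (p : Fin (m+1)) (e : (Fin (m+1) → ℝ) → ℝ)
    (he : ContDiff ℝ 1 e)
    (hD : ∀ x ∈ cube (m+1), (∃ q, x q = 0) → e x = 0) :
    ∫ x in cube (m+1), (e x)^2 ≤ (4/π^2) * ∫ x in cube (m+1), (pd p e x)^2 := by
  have hπ := Real.pi_pos
  have hec : Continuous e := he.continuous
  have hpdc : Continuous (pd p e) := by
    have h1 : Continuous (fderiv ℝ e) := he.continuous_fderiv one_ne_zero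
    exact (ContinuousLinearMap.apply ℝ ℝ
      (Pi.single p 1 : Fin (m+1) → ℝ)).continuous.comp h1
  have hmc : MeasurableSet (cube (m+1)) :=
    MeasurableSet.univ_pi (fun i => measurableSet_Icc)
  have hcompact : IsCompact (cube (m+1)) := isCompact_univ_pi (fun i => isCompact_Icc)
  set h : (Fin (m+1) → ℝ) → ℝ := fun x => (4/π^2) * (pd p e x)^2 - (e x)^2 with h_def
  have hhc : Continuous h := ((continuous_const.mul (hpdc.pow 2)).sub (hec.pow 2))
  have hinth : IntegrableOn h (cube (m+1)) :=
    hhc.continuousOn.integrableOn_compact hcompact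
  have hinte : IntegrableOn (fun x => (e x)^2) (cube (m+1)) :=
    (hec.pow 2).continuousOn.integrableOn_compact hcompact
  have hintpd : IntegrableOn (fun x => (pd p e x)^2) (cube (m+1)) :=
    (hpdc.pow 2).continuousOn.integrableOn_compact hcompact
  -- membership characterization
  have hmem : ∀ (a : ℝ) (y : Fin m → ℝ),
      p.insertNth a y ∈ cube (m+1) ↔ (a ∈ Set.Icc (0:ℝ) 1 ∧ y ∈ cube m) := by
    intro a y
    simp only [cube, Set.mem_pi, Set.mem_univ, forall_true_left]
    rw [Fin.forall_iff_succAbove p]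
    simp [Fin.insertNth_apply_same, Fin.insertNth_apply_succAbove]
  -- the line map and chain rule
  have hline : ∀ (y : Fin m → ℝ) (a : ℝ),
      p.insertNth a y = p.insertNth 0 y + a • (Pi.single p 1 : Fin (m+1) → ℝ) := by
    intro y a; funext j
    refine Fin.succAboveCases p ?_ ?_ j
    · simp [Fin.insertNth_apply_same]
    · intro i
      simp [Fin.insertNth_apply_succAbove, Pi.single_eq_of_ne (Fin.succAbove_ne p i)]
  have hgC : ∀ y : Fin m → ℝ, ContDiff ℝ 1 (fun a : ℝ => e (p.insertNth a y)) := by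
    intro y
    have : (fun a : ℝ => e (p.insertNth a y))
        = e ∘ (fun a : ℝ => p.insertNth 0 y + a • (Pi.single p 1 : Fin (m+1) → ℝ)) := by
      funext a; exact congrArg e (hline y a)
    rw [this]
    exact he.comp (contDiff_const.add (contDiff_id.smul contDiff_const))
  have hgd : ∀ (y : Fin m → ℝ) (a : ℝ),
      deriv (fun a : ℝ => e (p.insertNth a y)) a = pd p e (p.insertNth a y) := by
    intro y a
    have hL : HasDerivAt (fun a : ℝ => p.insertNth a y)
        (Pi.single p 1 : Fin (m+1) → ℝ) a := by
      have h2 : HasDerivAt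
          (fun a : ℝ => p.insertNth 0 y + a • (Pi.single p 1 : Fin (m+1) → ℝ))
          (Pi.single p 1 : Fin (m+1) → ℝ) a := by
        simpa using (HasDerivAt.const_add (p.insertNth 0 y)
          ((hasDerivAt_id a).smul_const (Pi.single p 1 : Fin (m+1) → ℝ)))
      exact h2.congr_of_eventuallyEq (Filter.Eventually.of_forall fun b => hline y b)
    exact ((he.differentiable one_ne_zero _).hasFDerivAt.comp_hasDerivAt a hL).deriv
  -- key nonnegativity via slicing
  have key : 0 ≤ ∫ x in cube (m+1), h x := by
    rw [← integral_indicator hmc]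
    set T := MeasurableEquiv.piFinSuccAbove (fun _ : Fin (m+1) => ℝ) p with hT
    have hmp : MeasurePreserving T.symm volume volume :=
      (volume_preserving_piFinSuccAbove (fun _ : Fin (m+1) => ℝ) p).symm T
    have hint : Integrable ((cube (m+1)).indicator h) volume :=
      (integrable_indicator_iff hmc).2 hinth
    have hcomp : ∫ z : ℝ × (Fin m → ℝ), (cube (m+1)).indicator h (T.symm z)
        = ∫ x, (cube (m+1)).indicator h x :=
      hmp.integral_comp T.symm.measurableEmbedding _
    rw [← hcomp]
    have hint2 : Integrable (fun z : ℝ × (Fin m → ℝ) => (cube (m+1)).indicator h (T.symm z))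
        volume :=
      (hmp.integrable_comp_emb T.symm.measurableEmbedding).2 hint
    have hTs : ∀ (a : ℝ) (y : Fin m → ℝ), T.symm (a, y) = p.insertNth a y :=
      fun a y => rfl
    rw [MeasureTheory.Measure.volume_eq_prod] at hint2 ⊢
    rw [integral_prod_symm _ hint2]
    apply integral_nonneg
    intro y
    simp only [hTs]
    by_cases hy : y ∈ cube m
    · have hfun : (fun a : ℝ => (cube (m+1)).indicator h (p.insertNth a y))
          = (Set.Icc (0:ℝ) 1).indicator (fun a => h (p.insertNth a y)) := by
        funext a
        by_cases ha : a ∈ Set.Icc (0:ℝ) 1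
        · rw [Set.indicator_of_mem ((hmem a y).2 ⟨ha, hy⟩), Set.indicator_of_mem ha]
        · rw [Set.indicator_of_notMem (fun hmem' => ha ((hmem a y).1 hmem').1),
            Set.indicator_of_notMem ha]
      rw [hfun, integral_indicator measurableSet_Icc]
      have h0 : (fun a : ℝ => e (p.insertNth a y)) 0 = 0 :=
        hD _ ((hmem 0 y).2 ⟨⟨le_rfl, zero_le_one⟩, hy⟩)
          ⟨p, Fin.insertNth_apply_same _ _ _⟩
      have h1d := wirtinger_1d_s1 _ (hgC y) h0
      have heq : ∀ a : ℝ, h (p.insertNth a y)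
          = (4/π^2) * (deriv (fun a : ℝ => e (p.insertNth a y)) a)^2
            - ((fun a : ℝ => e (p.insertNth a y)) a)^2 := by
        intro a; rw [hgd y a]
      simp only [heq]
      exact h1d
    · have : (fun a : ℝ => (cube (m+1)).indicator h (p.insertNth a y)) = fun _ => 0 :=
        funext fun a => Set.indicator_of_notMem (fun hmem' => hy ((hmem a y).1 hmem').2) _
      rw [this]
      simp
  -- conclude
  have hsplit : ∫ x in cube (m+1), h x
      = (4/π^2) * (∫ x in cube (m+1), (pd p e x)^2) - ∫ x in cube (m+1), (e x)^2 := by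
    rw [h_def]
    rw [integral_sub (hintpd.const_mul _) hinte, integral_const_mul]
  linarith [key, hsplit.symm.le, hsplit.le]

/-- **n-D Wirtinger inequality (Lemma 1(i)).** If `e : [0,1]^n → ℝ` is continuously
differentiable and vanishes on `Γ_D` (i.e. whenever some coordinate is `0`), then
`∫_Ω e² dx ≤ (4/(π²n)) ∫_Ω |∇e|² dx`. -/
theorem wirtinger_nd (n : ℕ) (hn : 1 ≤ n) (e : (Fin n → ℝ) → ℝ)
    (he : ContDiff ℝ 1 e)
    (hD : ∀ x ∈ cube n, (∃ p, x p = 0) → e x = 0) :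
    ∫ x in cube n, (e x) ^ 2 ≤ (4 / (π ^ 2 * n)) * ∫ x in cube n, gradSq e x := by
  obtain ⟨m, rfl⟩ : ∃ m, n = m + 1 := ⟨n - 1, by omega⟩
  have hπ := Real.pi_pos
  have hcompact : IsCompact (cube (m+1)) := isCompact_univ_pi (fun i => isCompact_Icc)
  have hpdc : ∀ p : Fin (m+1), Continuous (pd p e) := by
    intro p
    have h1 : Continuous (fderiv ℝ e) := he.continuous_fderiv one_ne_zero
    exact (ContinuousLinearMap.apply ℝ ℝ
      (Pi.single p 1 : Fin (m+1) → ℝ)).continuous.comp h1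
  have hintpd : ∀ p : Fin (m+1), IntegrableOn (fun x => (pd p e x)^2) (cube (m+1)) :=
    fun p => ((hpdc p).pow 2).continuousOn.integrableOn_compact hcompact
  have hsum : ∫ x in cube (m+1), gradSq e x
      = ∑ p : Fin (m+1), ∫ x in cube (m+1), (pd p e x)^2 := by
    simp only [gradSq]
    exact integral_finset_sum _ (fun p _ => hintpd p)
  set A := ∫ x in cube (m+1), (e x)^2 with hA
  set B := ∫ x in cube (m+1), gradSq e x with hB
  have hmain : ((m:ℝ)+1) * A ≤ (4/π^2) * B := by
    calc ((m:ℝ)+1) * A = ∑ _p : Fin (m+1), A := by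
          rw [Finset.sum_const, Finset.card_univ]
          simp [mul_comm]
    _ ≤ ∑ p : Fin (m+1), (4/π^2) * ∫ x in cube (m+1), (pd p e x)^2 :=
          Finset.sum_le_sum (fun p _ => wirtinger_slice m p e he hD)
    _ = (4/π^2) * ∑ p : Fin (m+1), ∫ x in cube (m+1), (pd p e x)^2 := by
          rw [Finset.mul_sum]
    _ = (4/π^2) * B := by rw [hsum]
  have hcast : ((m+1 : ℕ) : ℝ) = (m:ℝ) + 1 := by push_cast; ring
  have hN : (0:ℝ) < (m:ℝ) + 1 := by positivity
  have hrw : (4:ℝ) / (π^2 * ((m:ℝ)+1)) * B = ((4/π^2) * B) / ((m:ℝ)+1) := by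
    field_simp
  rw [hcast, hrw, le_div_iff₀ hN]
  linarith
end
end

section
/- Let δ > 0, T > 0, T* ∈ (0,T), t₀ ∈ ℝ, and let b₀ ∈ ℝ. For m = 1,2,… let v_m and w_m be continuously differentiable real functions on [t₀, t₀+T] satisfying v_m′(t) + 2δ v_m(t) ≤ 0 and w_m′(t) − 2δ w_m(t) ≥ 0 for all t ∈ [t₀, t₀+T], together with the coupling conditions v₁(t₀) e^{−2δT*} ≤ b₀, v_m(t₀) e^{−2δT*} ≤ w_{m−1}(t₀) for m ≥ 2, and w_m(t₀+T) e^{−2δT*} ≤ v_m(t₀+T) for all m ≥ 1. Then with q = e^{−4δ(T−T*)}: w₁(t₀) ≤ q b₀, w_m(t₀) ≤ q w_{m−1}(t₀) for m ≥ 2, and hence w_m(t₀) ≤ q^m b₀ for all m ≥ 1. -/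
open Real

lemma decay_aux (a b c : ℝ) (hab : a ≤ b) (f f' : ℝ → ℝ)
    (hf : ∀ t ∈ Set.Icc a b, HasDerivWithinAt f (f' t) (Set.Icc a b) t)
    (h : ∀ t ∈ Set.Icc a b, f' t + c * f t ≤ 0) :
    f b ≤ f a * Real.exp (-(c * (b - a)))  := by
  set g : ℝ → ℝ := fun t => Real.exp (c * t) * f t with hgdef
  have hg : ∀ t ∈ Set.Icc a b,
      HasDerivWithinAt g (Real.exp (c * t) * (f' t + c * f t)) (Set.Icc a b) t := by
    intro t ht
    have h1 : HasDerivAt (fun t : ℝ => Real.exp (c * t)) (Real.exp (c * t) * c) t := by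
      have := (Real.hasDerivAt_exp (c * t)).comp t ((hasDerivAt_id t).const_mul c)
      simp only [mul_one] at this
      exact this
    have := (h1.hasDerivWithinAt).mul (hf t ht)
    convert this using 1
    exacts [rfl, rfl, rfl, by ring]
  have hmono : AntitoneOn g (Set.Icc a b) := by
    apply antitoneOn_of_deriv_nonpos (convex_Icc a b)
    · exact fun t ht => (hg t ht).continuousWithinAt
    · intro x hx
      rw [interior_Icc] at hx
      exact (((hg x (Set.Ioo_subset_Icc_self hx)).hasDerivAt
        (Icc_mem_nhds hx.1 hx.2)).differentiableAt).differentiableWithinAt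
    · intro x hx
      rw [interior_Icc] at hx
      have hd := (hg x (Set.Ioo_subset_Icc_self hx)).hasDerivAt (Icc_mem_nhds hx.1 hx.2)
      rw [hd.deriv]
      exact mul_nonpos_of_nonneg_of_nonpos (Real.exp_pos _).le
        (h x (Set.Ioo_subset_Icc_self hx))
  have hba : g b ≤ g a := hmono ⟨le_refl a, hab⟩ ⟨hab, le_refl b⟩ hab
  have := mul_le_mul_of_nonneg_left hba (Real.exp_pos (-(c * b))).le
  rw [hgdef] at this
  simp only [← mul_assoc, ← Real.exp_add] at this
  calc f b = Real.exp (-(c*b) + c*b) * f b := by simp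
    _ ≤ Real.exp (-(c*b) + c*a) * f a := this
    _ = f a * Real.exp (-(c * (b - a))) := by rw [mul_comm]; ring_nf

lemma exp_shift_aux (a b x y : ℝ) (h : a * Real.exp x ≤ b * Real.exp y) :
    a ≤ b * Real.exp (y - x) := by
  calc a = a * Real.exp x * Real.exp (-x) := by rw [mul_assoc, ← Real.exp_add]; simp
    _ ≤ b * Real.exp y * Real.exp (-x) := mul_le_mul_of_nonneg_right h (Real.exp_pos _).le
    _ = b * Real.exp (y - x) := by rw [mul_assoc, ← Real.exp_add]; ring_nf

/-- **Lemma 3, geometric-convergence part.** Let `δ, T > 0`, `T* ∈ (0,T)` and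
`b₀ ∈ ℝ`. Suppose for each `m ≥ 1` the C¹ functions `v_m, w_m` on `[t₀, t₀+T]`
(with derivatives `v'_m, w'_m`) satisfy `v'_m + 2δv_m ≤ 0`, `w'_m − 2δw_m ≥ 0`,
and the coupling conditions `v₁(t₀)e^{−2δT*} ≤ b₀`,
`v_m(t₀)e^{−2δT*} ≤ w_{m−1}(t₀)` for `m ≥ 2`, and
`w_m(t₀+T)e^{−2δT*} ≤ v_m(t₀+T)` for `m ≥ 1`. Then, with `q = e^{−4δ(T−T*)}`:
`w₁(t₀) ≤ q b₀`, `w_m(t₀) ≤ q w_{m−1}(t₀)` for `m ≥ 2`, and `w_m(t₀) ≤ qᵐ b₀`. -/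
theorem iterates_geometric_convergence (δ T Tstar t0 b0 : ℝ)
    (hδ : 0 < δ) (hT : 0 < T) (hTs : Tstar ∈ Set.Ioo 0 T)
    (v w v' w' : ℕ → ℝ → ℝ)
    (hv : ∀ m, 1 ≤ m → ∀ t ∈ Set.Icc t0 (t0 + T),
      HasDerivWithinAt (v m) (v' m t) (Set.Icc t0 (t0 + T)) t)
    (hw : ∀ m, 1 ≤ m → ∀ t ∈ Set.Icc t0 (t0 + T),
      HasDerivWithinAt (w m) (w' m t) (Set.Icc t0 (t0 + T)) t)
    (hv'c : ∀ m, 1 ≤ m → ContinuousOn (v' m) (Set.Icc t0 (t0 + T)))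
    (hw'c : ∀ m, 1 ≤ m → ContinuousOn (w' m) (Set.Icc t0 (t0 + T)))
    (hvineq : ∀ m, 1 ≤ m → ∀ t ∈ Set.Icc t0 (t0 + T), v' m t + 2 * δ * v m t ≤ 0)
    (hwineq : ∀ m, 1 ≤ m → ∀ t ∈ Set.Icc t0 (t0 + T), w' m t - 2 * δ * w m t ≥ 0)
    (hc1 : v 1 t0 * Real.exp (-2 * δ * Tstar) ≤ b0)
    (hcm : ∀ m, 2 ≤ m → v m t0 * Real.exp (-2 * δ * Tstar) ≤ w (m - 1) t0)
    (hcb : ∀ m, 1 ≤ m → w m (t0 + T) * Real.exp (-2 * δ * Tstar) ≤ v m (t0 + T)) :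
    w 1 t0 ≤ Real.exp (-4 * δ * (T - Tstar)) * b0 ∧
    (∀ m, 2 ≤ m → w m t0 ≤ Real.exp (-4 * δ * (T - Tstar)) * w (m - 1) t0) ∧
    (∀ m, 1 ≤ m → w m t0 ≤ Real.exp (-4 * δ * (T - Tstar)) ^ m * b0) := by
  have hab : t0 ≤ t0 + T := by linarith
  have key : ∀ m, 1 ≤ m →
      w m t0 ≤ Real.exp (-4 * δ * (T - Tstar)) * (v m t0 * Real.exp (-2 * δ * Tstar)) := by
    intro m hm
    -- forward decay for v
    have A := decay_aux t0 (t0 + T) (2 * δ) hab (v m) (v' m) (hv m hm) (hvineq m hm)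
    rw [show t0 + T - t0 = T by ring] at A
    -- backward growth for w, via decay of -w
    have B := decay_aux t0 (t0 + T) (-(2 * δ)) hab (fun t => -(w m t)) (fun t => -(w' m t))
      (fun t ht => (hw m hm t ht).neg)
      (fun t ht => by have := hwineq m hm t ht; linarith)
    rw [show t0 + T - t0 = T by ring] at B
    have B' : w m t0 * Real.exp (-(-(2 * δ) * T)) ≤ w m (t0 + T) := by nlinarith
    have C := hcb m hm
    have S1 : w m t0 * Real.exp (-(-(2 * δ) * T)) * Real.exp (-2 * δ * Tstar)
        ≤ v m (t0 + T) :=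
      le_trans (mul_le_mul_of_nonneg_right B' (Real.exp_pos _).le) C
    rw [mul_assoc, ← Real.exp_add] at S1
    have S2 : w m t0 * Real.exp (-(-(2 * δ) * T) + -2 * δ * Tstar)
        ≤ v m t0 * Real.exp (-(2 * δ * T)) := le_trans S1 A
    have S3 := exp_shift_aux _ _ _ _ S2
    calc w m t0 ≤ v m t0 * Real.exp (-(2 * δ * T) - (-(-(2 * δ) * T) + -2 * δ * Tstar)) := S3
      _ = Real.exp (-4 * δ * (T - Tstar)) * (v m t0 * Real.exp (-2 * δ * Tstar)) := by
          have hE : Real.exp (-4 * δ * (T - Tstar)) * Real.exp (-2 * δ * Tstar)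
              = Real.exp (-(2 * δ * T) - (-(-(2 * δ) * T) + -2 * δ * Tstar)) := by
            rw [← Real.exp_add]; ring_nf
          rw [← hE]; ring
  have hq : (0:ℝ) ≤ Real.exp (-4 * δ * (T - Tstar)) := (Real.exp_pos _).le
  have part1 : w 1 t0 ≤ Real.exp (-4 * δ * (T - Tstar)) * b0 :=
    le_trans (key 1 le_rfl) (mul_le_mul_of_nonneg_left hc1 hq)
  have part2 : ∀ m, 2 ≤ m →
      w m t0 ≤ Real.exp (-4 * δ * (T - Tstar)) * w (m - 1) t0 :=
    fun m hm => le_trans (key m (by omega)) (mul_le_mul_of_nonneg_left (hcm m hm) hq)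
  refine ⟨part1, part2, ?_⟩
  intro m hm
  induction m with
  | zero => omega
  | succ n ih =>
    rcases Nat.eq_zero_or_pos n with hn | hn
    · subst hn; simpa using part1
    · have h2 := part2 (n + 1) (by omega)
      simp only [Nat.add_sub_cancel] at h2
      calc w (n + 1) t0 ≤ Real.exp (-4 * δ * (T - Tstar)) * w n t0 := h2
        _ ≤ Real.exp (-4 * δ * (T - Tstar)) *
            (Real.exp (-4 * δ * (T - Tstar)) ^ n * b0) :=
          mul_le_mul_of_nonneg_left (ih hn) hq
        _ = Real.exp (-4 * δ * (T - Tstar)) ^ (n + 1) * b0 := by ring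
end

section
/- Let δ > 0, T > 0, T* ∈ (0,T), t₀ ∈ ℝ, and let b₀ ≥ 0. For m = 1,2,… let v_m and w_m be nonnegative continuously differentiable real functions on [t₀, t₀+T] satisfying v_m′(t) + 2δ v_m(t) ≤ 0 and w_m′(t) − 2δ w_m(t) ≥ 0 for all t ∈ [t₀, t₀+T], together with the coupling conditions v₁(t₀) e^{−2δT*} ≤ b₀, v_m(t₀) e^{−2δT*} ≤ w_{m−1}(t₀) for m ≥ 2, and w_m(t₀+T) e^{−2δT*} ≤ v_m(t₀+T) for all m ≥ 1. Then for all t ∈ [t₀, t₀+T] and all m ≥ 1, max{ v_m(t), w_m(t) } ≤ e^{2δT*} b₀. -/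
open Real

lemma exp_decay_aux {a b c : ℝ} {f f' : ℝ → ℝ}
    (hf : ∀ t ∈ Set.Icc a b, HasDerivWithinAt f (f' t) (Set.Icc a b) t)
    (hineq : ∀ t ∈ Set.Icc a b, f' t + c * f t ≤ 0)
    {s t : ℝ} (hs : s ∈ Set.Icc a b) (ht : t ∈ Set.Icc a b) (hst : s ≤ t) :
    f t ≤ f s * Real.exp (-(c * (t - s))) := by
  set g : ℝ → ℝ := fun x => f x * Real.exp (c * x) with hg
  have hfc : ContinuousOn f (Set.Icc a b) :=
    fun x hx => (hf x hx).continuousWithinAt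
  have hgc : ContinuousOn g (Set.Icc a b) :=
    hfc.mul ((Real.continuous_exp.comp (continuous_const.mul continuous_id)).continuousOn)
  have hgd : ∀ x ∈ Set.Ioo a b,
      HasDerivAt g (f' x * Real.exp (c * x) + f x * (Real.exp (c * x) * c)) x := by
    intro x hx
    have hx' : x ∈ Set.Icc a b := Set.mem_Icc_of_Ioo hx
    have hnhds : Set.Icc a b ∈ nhds x := Icc_mem_nhds hx.1 hx.2
    have hfd : HasDerivAt f (f' x) x := (hf x hx').hasDerivAt hnhds
    have hed : HasDerivAt (fun y => Real.exp (c * y)) (Real.exp (c * x) * c) x :=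
      HasDerivAt.exp (by simpa using (hasDerivAt_id x).const_mul c)
    exact hfd.mul hed
  have hanti : AntitoneOn g (Set.Icc a b) := by
    refine antitoneOn_of_deriv_nonpos (convex_Icc a b) hgc ?_ ?_
    · intro x hx
      rw [interior_Icc] at hx
      exact ((hgd x hx).differentiableAt).differentiableWithinAt
    · intro x hx
      rw [interior_Icc] at hx
      rw [(hgd x hx).deriv]
      have := hineq x (Set.mem_Icc_of_Ioo hx)
      nlinarith [Real.exp_pos (c * x)]
  have key : f t * Real.exp (c * t) ≤ f s * Real.exp (c * s) := hanti hs ht hst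
  have hEpos := Real.exp_pos (c * t)
  have heq : f s * Real.exp (-(c * (t - s))) = f s * Real.exp (c * s) / Real.exp (c * t) := by
    rw [eq_div_iff (ne_of_gt hEpos), mul_assoc, ← Real.exp_add]
    ring_nf
  rw [heq, le_div_iff₀ hEpos]
  exact key

/-- **Lemma 3, uniform-bound part (inequality (27)).** Under the same hypotheses
as the geometric-convergence part, if moreover `b₀ ≥ 0` and all `v_m, w_m` are
nonnegative on `[t₀, t₀+T]`, then for all `t ∈ [t₀, t₀+T]` and `m ≥ 1`,
`max{v_m(t), w_m(t)} ≤ e^{2δT*} b₀`. -/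
theorem iterates_uniform_bound (δ T Tstar t0 b0 : ℝ)
    (hδ : 0 < δ) (hT : 0 < T) (hTs : Tstar ∈ Set.Ioo 0 T) (hb0 : 0 ≤ b0)
    (v w v' w' : ℕ → ℝ → ℝ)
    (hvnn : ∀ m, 1 ≤ m → ∀ t ∈ Set.Icc t0 (t0 + T), 0 ≤ v m t)
    (hwnn : ∀ m, 1 ≤ m → ∀ t ∈ Set.Icc t0 (t0 + T), 0 ≤ w m t)
    (hv : ∀ m, 1 ≤ m → ∀ t ∈ Set.Icc t0 (t0 + T),
      HasDerivWithinAt (v m) (v' m t) (Set.Icc t0 (t0 + T)) t)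
    (hw : ∀ m, 1 ≤ m → ∀ t ∈ Set.Icc t0 (t0 + T),
      HasDerivWithinAt (w m) (w' m t) (Set.Icc t0 (t0 + T)) t)
    (hv'c : ∀ m, 1 ≤ m → ContinuousOn (v' m) (Set.Icc t0 (t0 + T)))
    (hw'c : ∀ m, 1 ≤ m → ContinuousOn (w' m) (Set.Icc t0 (t0 + T)))
    (hvineq : ∀ m, 1 ≤ m → ∀ t ∈ Set.Icc t0 (t0 + T), v' m t + 2 * δ * v m t ≤ 0)
    (hwineq : ∀ m, 1 ≤ m → ∀ t ∈ Set.Icc t0 (t0 + T), w' m t - 2 * δ * w m t ≥ 0)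
    (hc1 : v 1 t0 * Real.exp (-2 * δ * Tstar) ≤ b0)
    (hcm : ∀ m, 2 ≤ m → v m t0 * Real.exp (-2 * δ * Tstar) ≤ w (m - 1) t0)
    (hcb : ∀ m, 1 ≤ m → w m (t0 + T) * Real.exp (-2 * δ * Tstar) ≤ v m (t0 + T)) :
    ∀ m, 1 ≤ m → ∀ t ∈ Set.Icc t0 (t0 + T),
      max (v m t) (w m t) ≤ Real.exp (2 * δ * Tstar) * b0 := by
  set A : ℝ := Real.exp (-2 * δ * Tstar) with hA
  set B : ℝ := Real.exp (-(2 * δ * T)) with hB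
  have hApos : 0 < A := Real.exp_pos _
  have hBpos : 0 < B := Real.exp_pos _
  have hBA : B ≤ A := by
    apply Real.exp_le_exp.2
    nlinarith [hTs.2]
  have hAE : A * Real.exp (2 * δ * Tstar) = 1 := by
    rw [hA, ← Real.exp_add]; ring_nf; exact Real.exp_zero
  have ht0T : t0 ∈ Set.Icc t0 (t0 + T) := by constructor <;> linarith
  have htT : t0 + T ∈ Set.Icc t0 (t0 + T) := by constructor <;> linarith
  -- decay for v: for s ≤ t, v m t ≤ v m s * exp(-(2δ(t-s)))
  have hvdec : ∀ m, 1 ≤ m → ∀ s ∈ Set.Icc t0 (t0 + T), ∀ t ∈ Set.Icc t0 (t0 + T),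
      s ≤ t → v m t ≤ v m s * Real.exp (-(2 * δ * (t - s))) := by
    intro m hm s hs t ht hst
    exact exp_decay_aux (hv m hm) (fun x hx => hvineq m hm x hx) hs ht hst
  -- growth for w: for s ≤ t, w m s ≤ w m t * exp(-(2δ(t-s)))
  have hwgro : ∀ m, 1 ≤ m → ∀ s ∈ Set.Icc t0 (t0 + T), ∀ t ∈ Set.Icc t0 (t0 + T),
      s ≤ t → w m s ≤ w m t * Real.exp (-(2 * δ * (t - s))) := by
    intro m hm s hs t ht hst
    have hf : ∀ x ∈ Set.Icc t0 (t0 + T),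
        HasDerivWithinAt (fun y => -(w m y)) (-(w' m x)) (Set.Icc t0 (t0 + T)) x :=
      fun x hx => (hw m hm x hx).neg
    have hineq : ∀ x ∈ Set.Icc t0 (t0 + T),
        (-(w' m x)) + (-(2 * δ)) * (fun y => -(w m y)) x ≤ 0 := by
      intro x hx
      have := hwineq m hm x hx
      simp only
      linarith
    have key := exp_decay_aux hf hineq hs ht hst
    simp only [neg_mul, neg_neg] at key
    -- key : -w m t ≤ -(w m s * rexp (2 * δ * (t - s)))
    have key' : w m s * Real.exp (2 * δ * (t - s)) ≤ w m t := by linarith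
    have h2 := mul_le_mul_of_nonneg_right key' (Real.exp_pos (-(2 * δ * (t - s)))).le
    have hprod : Real.exp (2 * δ * (t - s)) * Real.exp (-(2 * δ * (t - s))) = 1 := by
      rw [← Real.exp_add]; ring_nf; exact Real.exp_zero
    calc w m s = w m s * (Real.exp (2 * δ * (t - s)) * Real.exp (-(2 * δ * (t - s)))) := by
          rw [hprod]; ring
      _ = w m s * Real.exp (2 * δ * (t - s)) * Real.exp (-(2 * δ * (t - s))) := by ring
      _ ≤ w m t * Real.exp (-(2 * δ * (t - s))) := h2
  -- decay over whole interval
  have hvT : ∀ m, 1 ≤ m → v m (t0 + T) ≤ v m t0 * B := by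
    intro m hm
    have := hvdec m hm t0 ht0T (t0 + T) htT (by linarith)
    simpa using this
  have hwT : ∀ m, 1 ≤ m → w m t0 ≤ w m (t0 + T) * B := by
    intro m hm
    have := hwgro m hm t0 ht0T (t0 + T) htT (by linarith)
    simpa using this
  -- key induction: v m t0 * A ≤ b0
  have hP : ∀ m, 1 ≤ m → v m t0 * A ≤ b0 := by
    intro m hm
    induction m with
    | zero => omega
    | succ n ih =>
      rcases Nat.eq_or_lt_of_le hm with h1 | h1
      · have hn0 : n = 0 := by omega
        subst hn0; simpa using hc1
      · have hn1 : 1 ≤ n := by omega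
        have IH := ih hn1
        have h1' : v (n + 1) t0 * A ≤ w n t0 := by
          have := hcm (n + 1) (by omega)
          simpa using this
        have h2 := hwT n hn1
        have h3 := hcb n hn1
        have h4 := hvT n hn1
        have hwTnn : 0 ≤ w n (t0 + T) := hwnn n hn1 _ htT
        have hvnn0 : 0 ≤ v n t0 := hvnn n hn1 _ ht0T
        -- v(n+1) t0 * A ≤ w n t0 ≤ w n (t0+T) * B ; w n (t0+T)*A ≤ v n (t0+T) ≤ v n t0 * B
        -- so v(n+1) t0 * A * A ≤ w n (t0+T) * B * A ≤ v n t0 * B * B ≤ v n t0 * A * A ≤ b0 * A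
        have h5 : w n (t0 + T) * B * A ≤ v n t0 * B * B := by nlinarith
        have h6 : v n t0 * B * B ≤ v n t0 * A * A := by
          nlinarith [mul_le_mul_of_nonneg_left (mul_le_mul hBA hBA hBpos.le hApos.le) hvnn0]
        have h7 : v (n + 1) t0 * A * A ≤ b0 * A := by nlinarith
        exact le_of_mul_le_mul_right (by linarith) hApos
  -- also: w m (t0+T) ≤ v m t0
  have hQ : ∀ m, 1 ≤ m → w m (t0 + T) ≤ v m t0 := by
    intro m hm
    have h3 := hcb m hm
    have h4 := hvT m hm
    have hvnn0 : 0 ≤ v m t0 := hvnn m hm _ ht0T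
    have : w m (t0 + T) * A ≤ v m t0 * A := by nlinarith
    exact le_of_mul_le_mul_right this hApos
  intro m hm t ht
  have hvt0 : v m t0 ≤ Real.exp (2 * δ * Tstar) * b0 := by
    have h := mul_le_mul_of_nonneg_right (hP m hm) (Real.exp_pos (2 * δ * Tstar)).le
    calc v m t0 = v m t0 * (A * Real.exp (2 * δ * Tstar)) := by rw [hAE]; ring
      _ = v m t0 * A * Real.exp (2 * δ * Tstar) := by ring
      _ ≤ b0 * Real.exp (2 * δ * Tstar) := h
      _ = Real.exp (2 * δ * Tstar) * b0 := mul_comm _ _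
  have hexple : Real.exp (-(2 * δ * (t - t0))) ≤ 1 := by
    apply Real.exp_le_one_iff.2
    nlinarith [ht.1]
  have hexple2 : Real.exp (-(2 * δ * (t0 + T - t))) ≤ 1 := by
    apply Real.exp_le_one_iff.2
    nlinarith [ht.2]
  have hvle : v m t ≤ v m t0 := by
    have h := hvdec m hm t0 ht0T t ht ht.1
    nlinarith [mul_le_mul_of_nonneg_left hexple (hvnn m hm t0 ht0T)]
  have hwle : w m t ≤ w m (t0 + T) := by
    have h := hwgro m hm t ht (t0 + T) htT ht.2
    nlinarith [mul_le_mul_of_nonneg_left hexple2 (hwnn m hm (t0 + T) htT)]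
  apply max_le
  · linarith
  · linarith [hQ m hm]
end

section
/- Let g₁ > 0 and let f : ℝ × [0,1] × ℝ → ℝ be C¹ with f(0,x,t) = 0 for all x,t and |∂f/∂z (z,x,t)| ≤ g₁ for all (z,x,t). Let z : [0,1] × [t₀,∞) → ℝ be a classical (C²) solution of z_tt(x,t) = z_xx(x,t) + f(z(x,t),x,t) with boundary conditions z(0,t) = 0 and z_x(1,t) = 0 for all t ≥ t₀. Then the energy E_z(t) = ½∫₀¹ (z_x(x,t)² + z_t(x,t)²) dx satisfies E_z(t) ≤ e^{(2g₁/π)(t−t₀)} E_z(t₀) for all t ≥ t₀. -/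
open MeasureTheory Real Filter

lemma icc_int_eq (h : ℝ → ℝ) : ∫ x in Set.Icc (0:ℝ) 1, h x = ∫ x in (0:ℝ)..1, h x := by
  rw [MeasureTheory.integral_Icc_eq_integral_Ioc, intervalIntegral.integral_of_le zero_le_one]

lemma hasDerivAt_fst' {F : ℝ × ℝ → ℝ} {x t : ℝ} (hF : DifferentiableAt ℝ F (x, t)) :
    HasDerivAt (fun y => F (y, t)) (fderiv ℝ F (x, t) (1, 0)) x := by
  have h1 : HasDerivAt (fun y : ℝ => (y, t)) ((1:ℝ), (0:ℝ)) x :=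
    (hasDerivAt_id x).prodMk (hasDerivAt_const x t)
  exact hF.hasFDerivAt.comp_hasDerivAt x h1

lemma hasDerivAt_snd' {F : ℝ × ℝ → ℝ} {x t : ℝ} (hF : DifferentiableAt ℝ F (x, t)) :
    HasDerivAt (fun s => F (x, s)) (fderiv ℝ F (x, t) (0, 1)) t := by
  have h1 : HasDerivAt (fun s : ℝ => (x, s)) ((0:ℝ), (1:ℝ)) t :=
    (hasDerivAt_const t x).prodMk (hasDerivAt_id t)
  exact hF.hasFDerivAt.comp_hasDerivAt t h1

lemma wirtinger (u : ℝ → ℝ) (hu : ContDiff ℝ 1 u) (h0 : u 0 = 0) :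
    ∫ x in (0:ℝ)..1, (u x)^2 ≤ (4/π^2) * ∫ x in (0:ℝ)..1, (deriv u x)^2 := by
  have hucont : Continuous u := hu.continuous
  have hdu : Continuous (deriv u) := hu.continuous_deriv le_rfl
  set g : ℝ → ℝ := fun x => (deriv u x)^2 - (π/2)^2 * (u x)^2 with hg
  have hgcont : Continuous g := by continuity
  have key : 0 ≤ ∫ x in (0:ℝ)..1, g x := by
    set S : ℝ → ℝ := fun x => Real.sin (π/2*x) with hSdef
    set C : ℝ → ℝ := fun x => Real.cos (π/2*x) with hCdef
    set B : ℝ → ℝ := fun x => (π/2) * (C x / S x) * (u x)^2 with hBdef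
    set β : ℝ → ℝ := fun x => π * (C x / S x) * (u x) * (deriv u x)
        - (π/2)^2 * (u x)^2 / (S x)^2 with hβdef
    have hScont : Continuous S := by fun_prop
    have hCcont : Continuous C := by fun_prop
    have hSpos : ∀ x ∈ Set.Ioc (0:ℝ) 1, 0 < S x := by
      intro x hx
      apply Real.sin_pos_of_pos_of_lt_pi
      · exact mul_pos (by positivity) hx.1
      · nlinarith [pi_pos, hx.2, hx.1]
    have hpyth : ∀ x : ℝ, S x ^ 2 + C x ^ 2 = 1 := fun x => sin_sq_add_cos_sq _
    -- derivative facts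
    have hlin : ∀ x : ℝ, HasDerivAt (fun y : ℝ => π/2*y) (π/2) x := by
      intro x
      simpa using (hasDerivAt_id x).const_mul (π/2)
    have hS' : ∀ x : ℝ, HasDerivAt S (π/2 * C x) x := by
      intro x
      have h : HasDerivAt S (Real.cos (π/2*x) * (π/2)) x :=
        (Real.hasDerivAt_sin (π/2*x)).comp x (hlin x)
      rw [mul_comm] at h
      exact h
    have hC' : ∀ x : ℝ, HasDerivAt C (-(π/2) * S x) x := by
      intro x
      have h : HasDerivAt C (-Real.sin (π/2*x) * (π/2)) x :=
        (Real.hasDerivAt_cos (π/2*x)).comp x (hlin x)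
      have e : -Real.sin (π/2*x) * (π/2) = -(π/2) * S x := by rw [hSdef]; ring
      rw [e] at h
      exact h
    have hu' : ∀ x : ℝ, HasDerivAt u (deriv u x) x :=
      fun x => (hu.differentiable one_ne_zero x).hasDerivAt
    have hB : ∀ x ∈ Set.Ioc (0:ℝ) 1, HasDerivAt B (β x) x := by
      intro x hx
      have hSne : S x ≠ 0 := ne_of_gt (hSpos x hx)
      have hdiv : HasDerivAt (fun y => C y / S y)
          ((-(π/2) * S x * S x - C x * (π/2 * C x)) / S x ^ 2) x :=
        (hC' x).div (hS' x) hSne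
      have hu2 : HasDerivAt (fun y => (u y)^2) (2 * u x * deriv u x) x := by
        simpa [mul_comm, mul_assoc] using (hu' x).fun_pow 2
      have hd := ((hdiv.const_mul (π/2)).mul hu2)
      have e2 : π/2 * ((-(π/2) * S x * S x - C x * (π/2 * C x)) / S x ^ 2) * u x ^ 2
          + π/2 * (C x / S x) * (2 * u x * deriv u x) = β x := by
        rw [hβdef]
        have h1 := hpyth x
        show _ = π * (C x / S x) * u x * deriv u x - (π/2)^2 * (u x)^2 / (S x)^2
        rw [show -(π/2) * S x * S x - C x * (π/2 * C x) = -(π/2) * (S x^2 + C x^2) by ring, h1]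
        ring
      rw [e2] at hd
      exact hd
    have hβg : ∀ x ∈ Set.Ioc (0:ℝ) 1, β x ≤ g x := by
      intro x hx
      have hS := hSpos x hx
      have hSne : S x ≠ 0 := ne_of_gt hS
      have h1 := hpyth x
      have hS2 : 0 < S x ^ 2 := by positivity
      rw [← mul_le_mul_iff_right₀ hS2]
      have e1 : S x ^ 2 * β x = π * C x * S x * u x * deriv u x - (π/2)^2 * (u x)^2 := by
        rw [hβdef]; field_simp
      have hgx : g x = (deriv u x)^2 - (π/2)^2 * (u x)^2 := by rw [hg]
      rw [e1, hgx]
      have key : S x^2*((deriv u x)^2 - (π/2)^2*(u x)^2)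
          - (π*C x*S x*u x*deriv u x - (π/2)^2*(u x)^2)
          = (S x*deriv u x - (π/2)*C x*u x)^2 := by
        linear_combination (-(π/2)^2 * (u x)^2) * h1
      nlinarith [key, sq_nonneg (S x*deriv u x - (π/2)*C x*u x)]
    have hB1 : B 1 = 0 := by
      simp [hBdef, hCdef, Real.cos_pi_div_two]
    -- for each ε ∈ (0,1), -B ε ≤ ∫_ε^1 g
    have hεineq : ∀ ε ∈ Set.Ioo (0:ℝ) 1, -B ε ≤ ∫ x in ε..1, g x := by
      intro ε hε
      have hε1 : ε ≤ 1 := hε.2.le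
      have hsub : Set.uIcc ε 1 ⊆ Set.Ioc (0:ℝ) 1 := by
        rw [Set.uIcc_of_le hε1]
        intro y hy
        exact ⟨lt_of_lt_of_le hε.1 hy.1, hy.2⟩
      have hβcont : ContinuousOn β (Set.uIcc ε 1) := by
        apply ContinuousOn.sub
        · exact (((continuousOn_const.mul ((hCcont.continuousOn).div
            (hScont.continuousOn) (fun y hy => ne_of_gt (hSpos y (hsub hy))))).mul
            hucont.continuousOn).mul hdu.continuousOn)
        · exact ((continuous_const.mul (hucont.pow 2)).continuousOn).div
            ((hScont.pow 2).continuousOn) (fun y hy => by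
              have := hSpos y (hsub hy); positivity)
      have hFTC : ∫ x in ε..1, β x = B 1 - B ε :=
        intervalIntegral.integral_eq_sub_of_hasDerivAt
          (fun x hx => hB x (hsub hx))
          (hβcont.intervalIntegrable)
      have hmono : ∫ x in ε..1, β x ≤ ∫ x in ε..1, g x := by
        apply intervalIntegral.integral_mono_on hε1
          (hβcont.intervalIntegrable) (hgcont.intervalIntegrable ε 1)
        intro x hx
        exact hβg x (hsub (by rwa [Set.uIcc_of_le hε1]))
      rw [hFTC, hB1, zero_sub] at hmono
      linarith [hmono]
    -- limits
    have hIg : Tendsto (fun ε => ∫ x in ε..1, g x) (nhdsWithin 0 (Set.Ioi 0))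
        (nhds (∫ x in (0:ℝ)..1, g x)) := by
      have hcont : Continuous (fun ε : ℝ => ∫ x in ε..1, g x) := by
        have hint : ∀ a b : ℝ, IntervalIntegrable g volume a b :=
          fun a b => hgcont.intervalIntegrable a b
        have h := (intervalIntegral.continuous_primitive hint 1).neg
        convert h using 1
        funext ε
        rw [Pi.neg_apply, ← intervalIntegral.integral_symm]
      exact (hcont.tendsto 0).mono_left nhdsWithin_le_nhds
    have hBlim : Tendsto (fun ε => B ε) (nhdsWithin 0 (Set.Ioi 0)) (nhds 0) := by
      have t1 : Tendsto (fun ε => u ε / ε) (nhdsWithin 0 (Set.Ioi 0)) (nhds (deriv u 0)) := by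
        have := (hasDerivAt_iff_tendsto_slope.mp (hu' 0)).mono_left
          (nhdsWithin_mono 0 (fun y hy => Set.mem_compl_singleton_iff.mpr (ne_of_gt hy)))
        apply this.congr'
        filter_upwards [eventually_mem_nhdsWithin] with y hy
        simp [slope, h0, div_eq_inv_mul]
      have t2 : Tendsto (fun ε => S ε / ε) (nhdsWithin 0 (Set.Ioi 0)) (nhds (π/2)) := by
        have hS0 : HasDerivAt S (π/2) 0 := by
          have := hS' 0
          simpa [hCdef] using this
        have hS00 : S 0 = 0 := by simp [hSdef]
        have := (hasDerivAt_iff_tendsto_slope.mp hS0).mono_left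
          (nhdsWithin_mono 0 (fun y hy => Set.mem_compl_singleton_iff.mpr (ne_of_gt hy)))
        apply this.congr'
        filter_upwards [eventually_mem_nhdsWithin] with y hy
        simp [slope, hS00, div_eq_inv_mul]
      have t3 : Tendsto (fun ε => ε / S ε) (nhdsWithin 0 (Set.Ioi 0)) (nhds (2/π)) := by
        have := t2.inv₀ (by positivity : (π/2) ≠ 0)
        have h24 : ((π/2):ℝ)⁻¹ = 2/π := by
          rw [inv_div]
        rw [h24] at this
        apply this.congr'
        filter_upwards [eventually_mem_nhdsWithin] with y hy
        simp [inv_div]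
      have tC : Tendsto (fun ε => C ε) (nhdsWithin 0 (Set.Ioi 0)) (nhds 1) := by
        have : C 0 = 1 := by simp [hCdef]
        rw [← this]
        exact (hCcont.tendsto 0).mono_left nhdsWithin_le_nhds
      have tid : Tendsto (fun ε : ℝ => ε) (nhdsWithin 0 (Set.Ioi 0)) (nhds 0) :=
        tendsto_id.mono_left nhdsWithin_le_nhds
      have tprod : Tendsto (fun ε => (π/2) * C ε * (u ε / ε)^2 * (ε / S ε) * ε)
          (nhdsWithin 0 (Set.Ioi 0)) (nhds ((π/2) * 1 * (deriv u 0)^2 * (2/π) * 0)) :=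
        ((((tendsto_const_nhds.mul tC).mul (t1.pow 2)).mul t3).mul tid)
      rw [mul_zero] at tprod
      apply tprod.congr'
      filter_upwards [Ioo_mem_nhdsGT_of_mem (Set.mem_Ico.mpr ⟨le_refl 0, zero_lt_one⟩)] with ε hε
      have hεpos : (0:ℝ) < ε := hε.1
      have hSne : S ε ≠ 0 := ne_of_gt (hSpos ε ⟨hε.1, hε.2.le⟩)
      rw [hBdef]
      field_simp
    have hnegB : Tendsto (fun ε => -B ε) (nhdsWithin 0 (Set.Ioi 0)) (nhds 0) := by
      simpa using hBlim.neg
    refine le_of_tendsto_of_tendsto hnegB hIg ?_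
    filter_upwards [Ioo_mem_nhdsGT_of_mem (Set.mem_Ico.mpr ⟨le_refl (0:ℝ), zero_lt_one⟩)] with ε hε
    exact hεineq ε hε
  have hint1 : IntervalIntegrable (fun x => (deriv u x)^2) volume 0 1 :=
    (hdu.pow 2).intervalIntegrable 0 1
  have hint2 : IntervalIntegrable (fun x => (π/2)^2 * (u x)^2) volume 0 1 :=
    (continuous_const.mul (hucont.pow 2)).intervalIntegrable 0 1
  rw [hg] at key
  rw [intervalIntegral.integral_sub hint1 hint2, intervalIntegral.integral_const_mul] at key
  have hπ : (0:ℝ) < π ^ 2 := by positivity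
  rw [div_mul_eq_mul_div, le_div_iff₀ hπ]
  nlinarith [key]

/-- **Proposition 1 (energy growth bound for the 1-D semilinear wave equation).**
If `f` is C¹ with `f(0,x,t) = 0` and `|∂f/∂z| ≤ g₁`, and `z` is a classical (C²)
solution of `z_tt = z_xx + f(z,x,t)` on `[0,1] × [t₀,∞)` with `z(0,t) = 0` and
`z_x(1,t) = 0`, then the energy `E_z(t) = ½∫₀¹ (z_x² + z_t²) dx` satisfies
`E_z(t) ≤ e^{(2g₁/π)(t−t₀)} E_z(t₀)` for all `t ≥ t₀`. -/
theorem energy_growth_1d (g1 t0 : ℝ) (hg1 : 0 < g1)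
    (f : ℝ → ℝ → ℝ → ℝ)
    (hf : ContDiff ℝ 1 fun q : ℝ × ℝ × ℝ => f q.1 q.2.1 q.2.2)
    (hf0 : ∀ x ∈ Set.Icc (0:ℝ) 1, ∀ t : ℝ, f 0 x t = 0)
    (hfz : ∀ z : ℝ, ∀ x ∈ Set.Icc (0:ℝ) 1, ∀ t : ℝ, |deriv (fun y => f y x t) z| ≤ g1)
    (z : ℝ → ℝ → ℝ)
    (hz : ContDiff ℝ 2 fun q : ℝ × ℝ => z q.1 q.2)
    (hwave : ∀ x ∈ Set.Icc (0:ℝ) 1, ∀ t, t0 ≤ t →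
      deriv (deriv fun s => z x s) t = deriv (deriv fun y => z y t) x + f (z x t) x t)
    (hbc0 : ∀ t, t0 ≤ t → z 0 t = 0)
    (hbc1 : ∀ t, t0 ≤ t → deriv (fun y => z y t) 1 = 0)
    (Ez : ℝ → ℝ)
    (hEz : ∀ t, Ez t = (1/2) * ∫ x in Set.Icc (0:ℝ) 1,
      ((deriv (fun y => z y t) x) ^ 2 + (deriv (fun s => z x s) t) ^ 2)) :
    ∀ t, t0 ≤ t → Ez t ≤ Real.exp ((2 * g1 / π) * (t - t0)) * Ez t0 := by
  set Z : ℝ × ℝ → ℝ := fun q => z q.1 q.2 with hZdef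
  have hZ2 : ContDiff ℝ 2 Z := hz
  have hZd : Differentiable ℝ Z := hZ2.differentiable (by norm_num)
  set U : ℝ × ℝ → ℝ := fun q => fderiv ℝ Z q (1, 0) with hUdef
  set V : ℝ × ℝ → ℝ := fun q => fderiv ℝ Z q (0, 1) with hVdef
  have hfd : ContDiff ℝ 1 (fderiv ℝ Z) := hZ2.fderiv_right (by norm_num)
  have hU1 : ContDiff ℝ 1 U := hfd.clm_apply contDiff_const
  have hV1 : ContDiff ℝ 1 V := hfd.clm_apply contDiff_const
  have hUd : Differentiable ℝ U := hU1.differentiable one_ne_zero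
  have hVd : Differentiable ℝ V := hV1.differentiable one_ne_zero
  have hUeq : ∀ x t : ℝ, deriv (fun y => z y t) x = U (x, t) :=
    fun x t => (hasDerivAt_fst' (hZd (x, t))).deriv
  have hVeq : ∀ x t : ℝ, deriv (fun s => z x s) t = V (x, t) :=
    fun x t => (hasDerivAt_snd' (hZd (x, t))).deriv
  set Ux : ℝ × ℝ → ℝ := fun q => fderiv ℝ U q (1, 0) with hUxdef
  set Ut : ℝ × ℝ → ℝ := fun q => fderiv ℝ U q (0, 1) with hUtdef
  set Vx : ℝ × ℝ → ℝ := fun q => fderiv ℝ V q (1, 0) with hVxdef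
  set Vt : ℝ × ℝ → ℝ := fun q => fderiv ℝ V q (0, 1) with hVtdef
  have hUcont : Continuous U := hU1.continuous
  have hVcont : Continuous V := hV1.continuous
  have hUxcont : Continuous Ux := (hU1.continuous_fderiv one_ne_zero).clm_apply continuous_const
  have hUtcont : Continuous Ut := (hU1.continuous_fderiv one_ne_zero).clm_apply continuous_const
  have hVxcont : Continuous Vx := (hV1.continuous_fderiv one_ne_zero).clm_apply continuous_const
  have hVtcont : Continuous Vt := (hV1.continuous_fderiv one_ne_zero).clm_apply continuous_const
  -- Clairaut
  have hsymm : ∀ q : ℝ × ℝ, Ut q = Vx q := by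
    intro q
    have h2 : DifferentiableAt ℝ (fderiv ℝ Z) q := (hfd.differentiable one_ne_zero) q
    have hsec := second_derivative_symmetric (f := Z) (f' := fderiv ℝ Z)
      (f'' := fderiv ℝ (fderiv ℝ Z) q) (fun y => (hZd y).hasFDerivAt)
      h2.hasFDerivAt ((0:ℝ), (1:ℝ)) ((1:ℝ), (0:ℝ))
    have eU : fderiv ℝ U q = (fderiv ℝ (fderiv ℝ Z) q).flip ((1:ℝ), (0:ℝ)) := by
      rw [hUdef, fderiv_clm_apply h2 (differentiableAt_const _)]
      simp
    have eV : fderiv ℝ V q = (fderiv ℝ (fderiv ℝ Z) q).flip ((0:ℝ), (1:ℝ)) := by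
      rw [hVdef, fderiv_clm_apply h2 (differentiableAt_const _)]
      simp
    rw [hUtdef, hVxdef]
    simp only [eU, eV]
    simpa using hsec
  -- wave equation in terms of U, V
  have hwave' : ∀ x ∈ Set.Icc (0:ℝ) 1, ∀ t, t0 ≤ t →
      Vt (x, t) = Ux (x, t) + f (z x t) x t := by
    intro x hx t ht
    have e1 : (deriv fun s => z x s) = fun s => V (x, s) := funext fun s => hVeq x s
    have e2 : (deriv fun y => z y t) = fun y => U (y, t) := funext fun y => hUeq y t
    have h := hwave x hx t ht
    rw [e1, e2, (hasDerivAt_snd' (hVd (x, t))).deriv, (hasDerivAt_fst' (hUd (x, t))).deriv] at h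
    exact h
  -- energy in terms of U, V
  have hEz' : ∀ t, Ez t = (1/2) * ∫ x in Set.Icc (0:ℝ) 1, (U (x,t)^2 + V (x,t)^2) := by
    intro t
    rw [hEz t]
    congr 1
    refine integral_congr_ae (Filter.Eventually.of_forall fun x => ?_)
    simp only [hUeq, hVeq]
  -- derivative of the energy
  set D : ℝ → ℝ := fun t => ∫ x in Set.Icc (0:ℝ) 1,
      (U (x, t) * Ut (x, t) + V (x, t) * Vt (x, t)) with hDdef
  have hE' : ∀ t : ℝ, HasDerivAt Ez (D t) t := by
    intro t1
    set K : Set (ℝ × ℝ) := Set.Icc (0:ℝ) 1 ×ˢ Set.Icc (t1 - 1) (t1 + 1) with hK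
    have hKcomp : IsCompact K := isCompact_Icc.prod isCompact_Icc
    set φ : ℝ × ℝ → ℝ := fun q => 2 * U q * Ut q + 2 * V q * Vt q with hφ
    have hφcont : Continuous φ :=
      ((continuous_const.mul hUcont).mul hUtcont).add ((continuous_const.mul hVcont).mul hVtcont)
    obtain ⟨Cb, hCb⟩ : ∃ C, ∀ q ∈ K, ‖φ q‖ ≤ C :=
      hKcomp.exists_bound_of_continuousOn hφcont.continuousOn
    have cx : ∀ s : ℝ, Continuous fun x : ℝ => ((x, s) : ℝ × ℝ) :=
      fun s => continuous_id.prodMk continuous_const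
    have hFcont : ∀ s : ℝ, Continuous fun x => U (x, s)^2 + V (x, s)^2 :=
      fun s => ((hUcont.comp (cx s)).pow 2).add ((hVcont.comp (cx s)).pow 2)
    have main := hasDerivAt_integral_of_dominated_loc_of_deriv_le (s := Metric.ball t1 1) (Metric.ball_mem_nhds t1 one_pos)
      (F := fun s x => U (x, s)^2 + V (x, s)^2)
      (F' := fun s x => φ (x, s)) (x₀ := t1)
      (μ := volume.restrict (Set.Icc (0:ℝ) 1)) (bound := fun _ => Cb)
      (Filter.Eventually.of_forall fun s => (hFcont s).aestronglyMeasurable.restrict)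
      ((hFcont t1).integrableOn_Icc)
      ((hφcont.comp (cx t1)).aestronglyMeasurable.restrict)
      ?_ (integrable_const _) ?_
    · have hEzfun : Ez = fun t => (1/2 : ℝ) * ∫ x in Set.Icc (0:ℝ) 1, (U (x,t)^2 + V (x,t)^2) :=
        funext hEz'
      rw [hEzfun]
      have hD : D t1 = (1/2 : ℝ) * ∫ x in Set.Icc (0:ℝ) 1, φ (x, t1) := by
        have e : (fun x => φ (x, t1))
            = fun x => 2 * (U (x,t1) * Ut (x,t1) + V (x,t1) * Vt (x,t1)) := by
          funext x; rw [hφ]; ring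
        have hD0 : D t1 = ∫ x in Set.Icc (0:ℝ) 1,
            (U (x,t1) * Ut (x,t1) + V (x,t1) * Vt (x,t1)) := rfl
        rw [hD0, e, MeasureTheory.integral_const_mul]
        ring
      rw [hD]
      exact main.2.const_mul (1/2 : ℝ)
    · filter_upwards [ae_restrict_mem measurableSet_Icc] with x hx
      intro s hs
      apply hCb
      refine Set.mk_mem_prod hx ?_
      rw [Metric.mem_ball, Real.dist_eq] at hs
      have h1 := abs_sub_lt_iff.mp hs
      exact Set.mem_Icc.mpr ⟨by linarith [h1.1, h1.2], by linarith [h1.1, h1.2]⟩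
    · refine Filter.Eventually.of_forall fun x => fun s _ => ?_
      have hU' : HasDerivAt (fun s => U (x, s)) (Ut (x, s)) s := hasDerivAt_snd' (hUd (x, s))
      have hV' : HasDerivAt (fun s => V (x, s)) (Vt (x, s)) s := hasDerivAt_snd' (hVd (x, s))
      have := (hU'.fun_pow 2).fun_add (hV'.fun_pow 2)
      convert this using 1
      rw [hφ]
      push_cast
      ring
  -- boundary/IBP identity
  have hIBP : ∀ t, t0 ≤ t → D t = ∫ x in Set.Icc (0:ℝ) 1, V (x, t) * f (z x t) x t := by
    intro t ht
    have cx : Continuous fun x : ℝ => ((x, t) : ℝ × ℝ) := continuous_id.prodMk continuous_const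
    have hzcont : Continuous fun x => z x t := hZ2.continuous.comp cx
    have hfc : Continuous fun x => f (z x t) x t :=
      hf.continuous.comp (hzcont.prodMk (continuous_id.prodMk continuous_const))
    have hbV0 : V (0, t) = 0 := by
      have hd1 : HasDerivWithinAt (fun s => z 0 s) (V (0, t)) (Set.Ici t0) t :=
        (hasDerivAt_snd' (hZd (0, t))).hasDerivWithinAt
      have hd2 : HasDerivWithinAt (fun s => z 0 s) 0 (Set.Ici t0) t :=
        (hasDerivWithinAt_const t _ (0:ℝ)).congr (fun s hs => hbc0 s hs) (hbc0 t ht)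
      have huniq : UniqueDiffWithinAt ℝ (Set.Ici t0) t := uniqueDiffOn_Ici t0 t ht
      exact (hd1.derivWithin huniq).symm.trans (hd2.derivWithin huniq)
    have hbU1 : U (1, t) = 0 := by rw [← hUeq]; exact hbc1 t ht
    have e1 : Set.EqOn (fun x => U (x,t) * Ut (x,t) + V (x,t) * Vt (x,t))
        (fun x => (Ux (x,t) * V (x,t) + U (x,t) * Vx (x,t)) + V (x,t) * f (z x t) x t)
        (Set.Icc (0:ℝ) 1) := by
      intro x hx
      simp only []
      rw [hsymm (x,t), hwave' x hx t ht]
      ring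
    have hD : D t = ∫ x in Set.Icc (0:ℝ) 1, (U (x,t) * Ut (x,t) + V (x,t) * Vt (x,t)) := rfl
    rw [hD, MeasureTheory.setIntegral_congr_fun measurableSet_Icc e1]
    have hint1 : IntegrableOn (fun x => Ux (x,t) * V (x,t) + U (x,t) * Vx (x,t))
        (Set.Icc (0:ℝ) 1) volume :=
      (((hUxcont.comp cx).mul (hVcont.comp cx)).add
        ((hUcont.comp cx).mul (hVxcont.comp cx))).integrableOn_Icc
    have hint2 : IntegrableOn (fun x => V (x,t) * f (z x t) x t) (Set.Icc (0:ℝ) 1) volume :=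
      ((hVcont.comp cx).mul hfc).integrableOn_Icc
    rw [MeasureTheory.integral_add hint1 hint2]
    have hFTCint : ∫ x in Set.Icc (0:ℝ) 1, (Ux (x,t) * V (x,t) + U (x,t) * Vx (x,t)) = 0 := by
      rw [icc_int_eq]
      have hsub : ∫ x in (0:ℝ)..1, (Ux (x,t) * V (x,t) + U (x,t) * Vx (x,t))
          = U (1,t) * V (1,t) - U (0,t) * V (0,t) := by
        apply intervalIntegral.integral_eq_sub_of_hasDerivAt (f := fun x => U (x,t) * V (x,t))
        · intro x _
          exact (hasDerivAt_fst' (hUd (x,t))).mul (hasDerivAt_fst' (hVd (x,t)))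
        · exact (((hUxcont.comp cx).mul (hVcont.comp cx)).add
            ((hUcont.comp cx).mul (hVxcont.comp cx))).intervalIntegrable 0 1
      rw [hsub, hbU1, hbV0]
      ring
    rw [hFTCint, zero_add]
  -- the key differential inequality
  have hEznn : ∀ t, 0 ≤ Ez t := by
    intro t
    rw [hEz t]
    have : 0 ≤ ∫ x in Set.Icc (0:ℝ) 1,
        ((deriv (fun y => z y t) x) ^ 2 + (deriv (fun s => z x s) t) ^ 2) :=
      setIntegral_nonneg measurableSet_Icc (fun x _ => by positivity)
    linarith
  have hbound : ∀ t, t0 ≤ t → |D t| ≤ (2 * g1 / π) * Ez t := by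
    intro t ht
    have cx : Continuous fun x : ℝ => ((x, t) : ℝ × ℝ) := continuous_id.prodMk continuous_const
    have hzcont : Continuous fun x => z x t := hZ2.continuous.comp cx
    have hfc : Continuous fun x => f (z x t) x t :=
      hf.continuous.comp (hzcont.prodMk (continuous_id.prodMk continuous_const))
    have hfbd : ∀ x ∈ Set.Icc (0:ℝ) 1, |f (z x t) x t| ≤ g1 * |z x t| := by
      intro x hx
      have hdifff : ∀ y ∈ (Set.univ : Set ℝ), DifferentiableAt ℝ (fun y => f y x t) y := by
        intro y _
        exact (hf.differentiable one_ne_zero _).comp y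
          ((differentiable_id.prodMk (differentiable_const ((x, t) : ℝ × ℝ))) y)
      have := convex_univ.norm_image_sub_le_of_norm_deriv_le hdifff
        (fun y _ => hfz y x hx t) (Set.mem_univ (0:ℝ)) (Set.mem_univ (z x t))
      simpa [hf0 x hx t, Real.norm_eq_abs] using this
    have hpw : ∀ x ∈ Set.Icc (0:ℝ) 1, |V (x,t) * f (z x t) x t|
        ≤ (g1/π) * V (x,t)^2 + (g1*π/4) * (z x t)^2 := by
      intro x hx
      have h1 : |V (x,t) * f (z x t) x t| ≤ g1 * (|V (x,t)| * |z x t|) := by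
        rw [abs_mul]
        calc |V (x,t)| * |f (z x t) x t| ≤ |V (x,t)| * (g1 * |z x t|) :=
              mul_le_mul_of_nonneg_left (hfbd x hx) (abs_nonneg _)
          _ = g1 * (|V (x,t)| * |z x t|) := by ring
      have h2 : |V (x,t)| * |z x t| ≤ (1/π) * V (x,t)^2 + (π/4) * (z x t)^2 := by
        have hπ := pi_pos
        rw [← sq_abs (V (x,t)), ← sq_abs (z x t), ← sub_nonneg]
        have e : ∀ a b : ℝ, (1/π) * a^2 + (π/4) * b^2 - a * b
            = (1/π) * (a - (π/2) * b)^2 := by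
          intro a b
          field_simp
          ring
        rw [e]
        positivity
      calc |V (x,t) * f (z x t) x t| ≤ g1 * (|V (x,t)| * |z x t|) := h1
        _ ≤ g1 * ((1/π) * V (x,t)^2 + (π/4) * (z x t)^2) :=
            mul_le_mul_of_nonneg_left h2 hg1.le
        _ = (g1/π) * V (x,t)^2 + (g1*π/4) * (z x t)^2 := by ring
    rw [hIBP t ht]
    have habs : |∫ x in Set.Icc (0:ℝ) 1, V (x,t) * f (z x t) x t|
        ≤ ∫ x in Set.Icc (0:ℝ) 1, |V (x,t) * f (z x t) x t| := by
      have h := MeasureTheory.norm_integral_le_integral_norm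
        (μ := volume.restrict (Set.Icc (0:ℝ) 1))
        (fun x => V (x,t) * f (z x t) x t)
      simp only [Real.norm_eq_abs] at h
      exact h
    have hint3 : IntegrableOn (fun x => |V (x,t) * f (z x t) x t|) (Set.Icc (0:ℝ) 1) volume :=
      (((hVcont.comp cx).mul hfc).abs).integrableOn_Icc
    have hint4 : IntegrableOn (fun x => (g1/π) * V (x,t)^2 + (g1*π/4) * (z x t)^2)
        (Set.Icc (0:ℝ) 1) volume :=
      ((continuous_const.mul ((hVcont.comp cx).pow 2)).add
        (continuous_const.mul (hzcont.pow 2))).integrableOn_Icc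
    have hmono : ∫ x in Set.Icc (0:ℝ) 1, |V (x,t) * f (z x t) x t|
        ≤ ∫ x in Set.Icc (0:ℝ) 1, ((g1/π) * V (x,t)^2 + (g1*π/4) * (z x t)^2) :=
      MeasureTheory.setIntegral_mono_on hint3 hint4 measurableSet_Icc hpw
    have hintV2 : IntegrableOn (fun x => V (x,t)^2) (Set.Icc (0:ℝ) 1) volume :=
      ((hVcont.comp cx).pow 2).integrableOn_Icc
    have hintU2 : IntegrableOn (fun x => U (x,t)^2) (Set.Icc (0:ℝ) 1) volume :=
      ((hUcont.comp cx).pow 2).integrableOn_Icc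
    have hintz2 : IntegrableOn (fun x => (z x t)^2) (Set.Icc (0:ℝ) 1) volume :=
      (hzcont.pow 2).integrableOn_Icc
    have hsplit : ∫ x in Set.Icc (0:ℝ) 1, ((g1/π) * V (x,t)^2 + (g1*π/4) * (z x t)^2)
        = (g1/π) * (∫ x in Set.Icc (0:ℝ) 1, V (x,t)^2)
          + (g1*π/4) * (∫ x in Set.Icc (0:ℝ) 1, (z x t)^2) := by
      rw [MeasureTheory.integral_add (hintV2.const_mul _) (hintz2.const_mul _),
        MeasureTheory.integral_const_mul, MeasureTheory.integral_const_mul]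
    have hwirt : ∫ x in Set.Icc (0:ℝ) 1, (z x t)^2
        ≤ (4/π^2) * ∫ x in Set.Icc (0:ℝ) 1, U (x,t)^2 := by
      have hu : ContDiff ℝ 1 fun x => z x t :=
        (hZ2.comp (contDiff_id.prodMk contDiff_const)).of_le (by norm_num)
      have hw := wirtinger (fun x => z x t) hu (hbc0 t ht)
      have ed : (fun x => (deriv (fun x => z x t) x)^2) = fun x => U (x,t)^2 := by
        funext x
        rw [hUeq]
      rw [ed] at hw
      rw [icc_int_eq, icc_int_eq]
      exact hw
    have hEzsplit : Ez t = (1/2) * ((∫ x in Set.Icc (0:ℝ) 1, U (x,t)^2)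
        + (∫ x in Set.Icc (0:ℝ) 1, V (x,t)^2)) := by
      rw [hEz' t, MeasureTheory.integral_add hintU2 hintV2]
    have hIV : 0 ≤ ∫ x in Set.Icc (0:ℝ) 1, V (x,t)^2 :=
      setIntegral_nonneg measurableSet_Icc (fun x _ => sq_nonneg _)
    have hIU : 0 ≤ ∫ x in Set.Icc (0:ℝ) 1, U (x,t)^2 :=
      setIntegral_nonneg measurableSet_Icc (fun x _ => sq_nonneg _)
    have hπ := pi_pos
    have hfinal : (g1*π/4) * (∫ x in Set.Icc (0:ℝ) 1, (z x t)^2)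
        ≤ (g1/π) * ∫ x in Set.Icc (0:ℝ) 1, U (x,t)^2 := by
      calc (g1*π/4) * (∫ x in Set.Icc (0:ℝ) 1, (z x t)^2)
          ≤ (g1*π/4) * ((4/π^2) * ∫ x in Set.Icc (0:ℝ) 1, U (x,t)^2) :=
            mul_le_mul_of_nonneg_left hwirt (by positivity)
        _ = (g1/π) * ∫ x in Set.Icc (0:ℝ) 1, U (x,t)^2 := by
            field_simp
    calc |∫ x in Set.Icc (0:ℝ) 1, V (x,t) * f (z x t) x t|
        ≤ ∫ x in Set.Icc (0:ℝ) 1, |V (x,t) * f (z x t) x t| := habs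
      _ ≤ ∫ x in Set.Icc (0:ℝ) 1, ((g1/π) * V (x,t)^2 + (g1*π/4) * (z x t)^2) := hmono
      _ = (g1/π) * (∫ x in Set.Icc (0:ℝ) 1, V (x,t)^2)
          + (g1*π/4) * (∫ x in Set.Icc (0:ℝ) 1, (z x t)^2) := hsplit
      _ ≤ (g1/π) * (∫ x in Set.Icc (0:ℝ) 1, V (x,t)^2)
          + (g1/π) * (∫ x in Set.Icc (0:ℝ) 1, U (x,t)^2) := by linarith [hfinal]
      _ = (2 * g1 / π) * Ez t := by
          rw [hEzsplit]
          ring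
  -- Gronwall
  intro T hT
  have key := norm_le_gronwallBound_of_norm_deriv_right_le (f := Ez) (f' := D)
    (δ := Ez t0) (K := 2 * g1 / π) (ε := 0) (a := t0) (b := T)
    (fun s _ => ((hE' s).differentiableAt.continuousAt).continuousWithinAt)
    (fun s _ => (hE' s).hasDerivWithinAt)
    (by rw [Real.norm_eq_abs, abs_of_nonneg (hEznn t0)])
    (fun s hs => by
      rw [Real.norm_eq_abs, Real.norm_eq_abs, abs_of_nonneg (hEznn s), add_zero]
      exact hbound s hs.1)
  have := key T (Set.mem_Icc.mpr ⟨hT, le_rfl⟩)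
  rw [gronwallBound_ε0, Real.norm_eq_abs, abs_of_nonneg (hEznn T)] at this
  calc Ez T ≤ Ez t0 * Real.exp (2 * g1 / π * (T - t0)) := this
    _ = Real.exp (2 * g1 / π * (T - t0)) * Ez t0 := mul_comm _ _
end
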